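/- arXiv:2302.11398 — 9 statements merged into one kernel-verified Lean document; each statement's English description precedes it below -/
import Mathlib

section
/- Decomposition of double interlacing when r = ρ: fix integers ρ ≥ 1 and n ≥ ρ and set r := ρ. Let x^{(k)} ∈ ℝ^k and y^{(k)} ∈ ℝ^k be given for 1 ≤ k ≤ n, and define z^{(τ)} ∈ ℝ^{n_τ} for ρ−n ≤ τ ≤ n by: z^{(τ)} := x^{(τ)} for ρ ≤ τ ≤ n; z^{(τ)} := y^{(ρ−τ)} for ρ−n ≤ τ ≤ 0; and z^{(τ)} := (y^{(ρ−τ)}_1, …, y^{(ρ−τ)}_{ρ−τ}, x^{(τ)}_1, …, x^{(τ)}_τ) for 0 < τ < ρ. Then the family (z^{(τ)})_{ρ−n ≤ τ ≤ n} is doubly interlacing if and only if the following three conditions hold: (a) x^{(1)} ≺ x^{(2)} ≺ ⋯ ≺ x^{(n)}; (b) y^{(1)} ≺ y^{(2)} ≺ ⋯ ≺ y^{(n)}; (c) y^{(i)}_i ≤ x^{(ρ−i+1)}_1 for every 1 ≤ i ≤ ρ. -/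
/-- The number of dots at level `τ`: `n_τ = r + (τ-ρ)₊` for `τ ≥ 0` and `n_τ = r - τ`
for `τ ≤ 0` (a single formula valid for all `τ ∈ ℤ`). -/
def nlev (r ρ : ℕ) (τ : ℤ) : ℕ :=
  r + (τ - ρ).toNat + (-τ).toNat

/-- Interlacing `x ≺ x'` for `x ∈ ℝ^k`, `x' ∈ ℝ^{k+1}`:
`x'_1 ≤ x_1 ≤ x'_2 ≤ x_2 ≤ ⋯ ≤ x_k ≤ x'_{k+1}`. -/
def Prec {k : ℕ} (x : Fin k → ℝ) (x' : Fin (k + 1) → ℝ) : Prop :=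
  ∀ i : Fin k, x' i.castSucc ≤ x i ∧ x i ≤ x' i.succ

/-- Interlacing `x ≼ x'` for `x, x' ∈ ℝ^k`:
`x_1 ≤ x'_1 ≤ x_2 ≤ x'_2 ≤ ⋯ ≤ x_k ≤ x'_k`. -/
def PrecEq {k : ℕ} (x x' : Fin k → ℝ) : Prop :=
  (∀ i, x i ≤ x' i) ∧ ∀ i j : Fin k, (j : ℕ) = (i : ℕ) + 1 → x' i ≤ x j

/-- The relation between consecutive levels of a doubly interlacing family:
`z^{(τ+1)} ≺ z^{(τ)}` if `τ ≤ -1`; `z^{(τ)} ≼ z^{(τ+1)}` if `0 ≤ τ ≤ ρ-1`; and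
`z^{(τ)} ≺ z^{(τ+1)}` if `τ ≥ ρ`. -/
def rel (r ρ : ℕ) (τ : ℤ) (z : Fin (nlev r ρ τ) → ℝ) (z' : Fin (nlev r ρ (τ + 1)) → ℝ) :
    Prop :=
  if τ ≤ -1 then
    ∃ h : nlev r ρ τ = nlev r ρ (τ + 1) + 1, Prec z' (z ∘ Fin.cast h.symm)
  else if τ < ρ then
    ∃ h : nlev r ρ τ = nlev r ρ (τ + 1), PrecEq z (z' ∘ Fin.cast h)
  else
    ∃ h : nlev r ρ (τ + 1) = nlev r ρ τ + 1, Prec z (z' ∘ Fin.cast h.symm)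

/-- The family `z^{(τ)}` built from two simply interlacing families `x`, `y` in the case
`r = ρ`: `z^{(τ)} = x^{(τ)}` for `ρ ≤ τ`, `z^{(τ)} = y^{(ρ-τ)}` for `τ ≤ 0`, and
`z^{(τ)} = (y^{(ρ-τ)}_1, …, y^{(ρ-τ)}_{ρ-τ}, x^{(τ)}_1, …, x^{(τ)}_τ)` for `0 < τ < ρ`. -/
noncomputable def zfam (ρ : ℕ) (x y : ∀ k : ℕ, Fin k → ℝ) (τ : ℤ)
    (j : Fin (nlev ρ ρ τ)) : ℝ :=
  if h1 : (ρ : ℤ) ≤ τ then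
    x τ.toNat ⟨j, by have := j.2; simp only [nlev] at this; omega⟩
  else if h2 : τ ≤ 0 then
    y ((ρ : ℤ) - τ).toNat ⟨j, by have := j.2; simp only [nlev] at this; omega⟩
  else if h3 : (j : ℕ) < ρ - τ.toNat then
    y (ρ - τ.toNat) ⟨j, h3⟩
  else
    x τ.toNat ⟨(j : ℕ) - (ρ - τ.toNat), by have := j.2; simp only [nlev] at this; omega⟩

lemma fin_app_cast' (f : ∀ k : ℕ, Fin k → ℝ) {a b i j : ℕ} (hab : a = b) (hij : i = j)
    (ha : i < a) (hb : j < b) : f a ⟨i, ha⟩ = f b ⟨j, hb⟩ := by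
  subst hab; subst hij; rfl

lemma prec_iff {k : ℕ} (x : Fin k → ℝ) (x' : Fin (k + 1) → ℝ) :
    Prec x x' ↔ ∀ (i : ℕ) (hi : i < k),
      x' ⟨i, by omega⟩ ≤ x ⟨i, hi⟩ ∧ x ⟨i, hi⟩ ≤ x' ⟨i + 1, by omega⟩ := by
  constructor
  · intro h i hi
    exact ⟨(h ⟨i, hi⟩).1, (h ⟨i, hi⟩).2⟩
  · intro h i
    exact ⟨(h i.1 i.2).1, (h i.1 i.2).2⟩

lemma precEq_iff {k : ℕ} (x x' : Fin k → ℝ) :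
    PrecEq x x' ↔ (∀ (i : ℕ) (hi : i < k), x ⟨i, hi⟩ ≤ x' ⟨i, hi⟩) ∧
      (∀ (i : ℕ) (hi : i < k) (hi1 : i + 1 < k), x' ⟨i, hi⟩ ≤ x ⟨i + 1, hi1⟩) := by
  constructor
  · intro ⟨h1, h2⟩
    exact ⟨fun i hi => h1 ⟨i, hi⟩, fun i hi hi1 => h2 ⟨i, hi⟩ ⟨i + 1, hi1⟩ rfl⟩
  · intro ⟨h1, h2⟩
    refine ⟨fun i => h1 i.1 i.2, fun i j hij => ?_⟩
    have hj' : i.1 + 1 < k := hij ▸ j.2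
    have := h2 i.1 i.2 hj'
    have hj : j = ⟨i.1 + 1, hj'⟩ := by ext; exact hij
    rw [hj]; exact this

lemma prec_congr {k k' : ℕ} (hkk : k = k') {x : Fin k → ℝ} {x' : Fin (k + 1) → ℝ}
    {z : Fin k' → ℝ} {z' : Fin (k' + 1) → ℝ}
    (h1 : ∀ (i : ℕ) (hi : i < k) (hi' : i < k'), x ⟨i, hi⟩ = z ⟨i, hi'⟩)
    (h2 : ∀ (i : ℕ) (hi : i < k + 1) (hi' : i < k' + 1), x' ⟨i, hi⟩ = z' ⟨i, hi'⟩) :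
    Prec x x' ↔ Prec z z' := by
  subst hkk
  have ex : x = z := funext fun i => h1 i.1 i.2 i.2
  have ex' : x' = z' := funext fun i => h2 i.1 i.2 i.2
  rw [ex, ex']

lemma zfam_pos (ρ : ℕ) (x y : ∀ k : ℕ, Fin k → ℝ) (τ : ℤ) (hτ : (ρ : ℤ) ≤ τ)
    (m : ℕ) (hm : τ = (m : ℤ)) (i : ℕ) (hi : i < nlev ρ ρ τ) (hi' : i < m) :
    zfam ρ x y τ ⟨i, hi⟩ = x m ⟨i, hi'⟩ := by
  simp only [zfam, dif_pos hτ]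
  exact fin_app_cast' x (by omega) rfl _ hi'

lemma zfam_neg (ρ : ℕ) (hρ : 1 ≤ ρ) (x y : ∀ k : ℕ, Fin k → ℝ) (τ : ℤ) (hτ : τ ≤ 0)
    (m : ℕ) (hm : (ρ : ℤ) - τ = (m : ℤ)) (i : ℕ) (hi : i < nlev ρ ρ τ) (hi' : i < m) :
    zfam ρ x y τ ⟨i, hi⟩ = y m ⟨i, hi'⟩ := by
  simp only [zfam, dif_neg (show ¬((ρ : ℤ) ≤ τ) by omega), dif_pos hτ]
  exact fin_app_cast' y (by omega) rfl _ hi'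

lemma zfam_midy (ρ : ℕ) (x y : ∀ k : ℕ, Fin k → ℝ) (τ : ℤ) (hτ0 : 0 < τ) (hτρ : τ < (ρ : ℤ))
    (m : ℕ) (hm : (ρ : ℤ) - τ = (m : ℤ)) (i : ℕ) (hi : i < nlev ρ ρ τ)
    (hlt : i < ρ - τ.toNat) (hi' : i < m) :
    zfam ρ x y τ ⟨i, hi⟩ = y m ⟨i, hi'⟩ := by
  simp only [zfam, dif_neg (show ¬((ρ : ℤ) ≤ τ) by omega),
    dif_neg (show ¬(τ ≤ 0) by omega), dif_pos (show ((⟨i, hi⟩ : Fin _) : ℕ) < ρ - τ.toNat from hlt)]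
  exact fin_app_cast' y (by omega) rfl _ hi'

lemma zfam_midx (ρ : ℕ) (x y : ∀ k : ℕ, Fin k → ℝ) (τ : ℤ) (hτ0 : 0 < τ) (hτρ : τ < (ρ : ℤ))
    (t : ℕ) (ht : τ = (t : ℤ)) (i : ℕ) (hi : i < nlev ρ ρ τ)
    (hge : ¬ i < ρ - t) (hi' : i - (ρ - t) < t) :
    zfam ρ x y τ ⟨i, hi⟩ = x t ⟨i - (ρ - t), hi'⟩ := by
  simp only [zfam, dif_neg (show ¬((ρ : ℤ) ≤ τ) by omega),
    dif_neg (show ¬(τ ≤ 0) by omega),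
    dif_neg (show ¬(((⟨i, hi⟩ : Fin _) : ℕ) < ρ - τ.toNat) by simpa using (by omega : ¬ i < ρ - τ.toNat))]
  exact fin_app_cast' x (by omega) (by omega) _ hi'

lemma mid_iff (s t N : ℕ) (hN : N = t + s + 1) (x y : ∀ k : ℕ, Fin k → ℝ)
    (z z' : Fin N → ℝ)
    (hz : ∀ (i : ℕ) (hi : i < N), z ⟨i, hi⟩ =
      if h : i < s + 1 then y (s + 1) ⟨i, h⟩ else x t ⟨i - (s + 1), by omega⟩)
    (hz' : ∀ (i : ℕ) (hi : i < N), z' ⟨i, hi⟩ =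
      if h : i < s then y s ⟨i, h⟩ else x (t + 1) ⟨i - s, by omega⟩) :
    PrecEq z z' ↔
      (Prec (y s) (y (s + 1)) ∧ Prec (x t) (x (t + 1)) ∧
        y (s + 1) ⟨s, by omega⟩ ≤ x (t + 1) ⟨0, by omega⟩) := by
  rw [precEq_iff, prec_iff, prec_iff]
  constructor
  · rintro ⟨hle, hnx⟩
    refine ⟨?_, ?_, ?_⟩
    · intro i hi
      constructor
      · have h := hle i (by omega)
        rw [hz i (by omega), hz' i (by omega), dif_pos (show i < s + 1 by omega),
          dif_pos hi] at h
        exact h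
      · have h := hnx i (by omega) (by omega)
        rw [hz (i + 1) (by omega), hz' i (by omega), dif_pos hi,
          dif_pos (show i + 1 < s + 1 by omega)] at h
        exact h
    · intro i hi
      constructor
      · have h := hnx (i + s) (by omega) (by omega)
        rw [hz' (i + s) (by omega), hz (i + s + 1) (by omega),
          dif_neg (show ¬ i + s < s by omega), dif_neg (show ¬ i + s + 1 < s + 1 by omega)] at h
        calc x (t + 1) ⟨i, by omega⟩ = x (t + 1) ⟨i + s - s, by omega⟩ :=
              fin_app_cast' x rfl (by omega) _ _
          _ ≤ x t ⟨i + s + 1 - (s + 1), by omega⟩ := h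
          _ = x t ⟨i, hi⟩ := fin_app_cast' x rfl (by omega) _ _
      · have h := hle (i + s + 1) (by omega)
        rw [hz (i + s + 1) (by omega), hz' (i + s + 1) (by omega),
          dif_neg (show ¬ i + s + 1 < s + 1 by omega), dif_neg (show ¬ i + s + 1 < s by omega)] at h
        calc x t ⟨i, hi⟩ = x t ⟨i + s + 1 - (s + 1), by omega⟩ :=
              fin_app_cast' x rfl (by omega) _ _
          _ ≤ x (t + 1) ⟨i + s + 1 - s, by omega⟩ := h
          _ = x (t + 1) ⟨i + 1, by omega⟩ := fin_app_cast' x rfl (by omega) _ _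
    · have h := hle s (by omega)
      rw [hz s (by omega), hz' s (by omega), dif_pos (show s < s + 1 by omega),
        dif_neg (show ¬ s < s by omega)] at h
      calc y (s + 1) ⟨s, by omega⟩ ≤ x (t + 1) ⟨s - s, by omega⟩ := h
        _ = x (t + 1) ⟨0, by omega⟩ := fin_app_cast' x rfl (by omega) _ _
  · rintro ⟨hy, hx, hbd⟩
    constructor
    · intro i hi
      rw [hz i hi, hz' i hi]
      split_ifs with h1 h2 h3
      · exact (hy i h2).1
      · calc y (s + 1) ⟨i, h1⟩ = y (s + 1) ⟨s, by omega⟩ := fin_app_cast' y rfl (by omega) _ _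
          _ ≤ x (t + 1) ⟨0, by omega⟩ := hbd
          _ = x (t + 1) ⟨i - s, by omega⟩ := fin_app_cast' x rfl (by omega) _ _
      · exact absurd h3 (by omega)
      · calc x t ⟨i - (s + 1), by omega⟩ ≤ x (t + 1) ⟨i - (s + 1) + 1, by omega⟩ :=
              (hx (i - (s + 1)) (by omega)).2
          _ = x (t + 1) ⟨i - s, by omega⟩ := fin_app_cast' x rfl (by omega) _ _
    · intro i hi hi1
      rw [hz' i hi, hz (i + 1) hi1]
      split_ifs with h1 h2 h3
      · exact (hy i h1).2
      · exact absurd (show i + 1 < s + 1 by omega) h2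
      · exact absurd h3 (by omega)
      · calc x (t + 1) ⟨i - s, by omega⟩ = x (t + 1) ⟨i + 1 - (s + 1), by omega⟩ :=
              fin_app_cast' x rfl (by omega) _ _
          _ ≤ x t ⟨i + 1 - (s + 1), by omega⟩ := (hx (i + 1 - (s + 1)) (by omega)).1

lemma pos_rel (ρ : ℕ) (x y : ∀ k : ℕ, Fin k → ℝ) (τ : ℤ) (m : ℕ) (hm : τ = (m : ℤ))
    (hτ : (ρ : ℤ) ≤ τ) (e : nlev ρ ρ (τ + 1) = nlev ρ ρ τ + 1) :
    Prec (zfam ρ x y τ) (zfam ρ x y (τ + 1) ∘ Fin.cast e.symm) ↔ Prec (x m) (x (m + 1)) := by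
  apply prec_congr (show nlev ρ ρ τ = m by unfold nlev; omega)
  · intro i hi hi'
    exact zfam_pos ρ x y τ hτ m hm i hi hi'
  · intro i hi hi'
    exact zfam_pos ρ x y (τ + 1) (by omega) (m + 1) (by omega) i _ hi'

lemma neg_rel (ρ : ℕ) (hρ : 1 ≤ ρ) (x y : ∀ k : ℕ, Fin k → ℝ) (τ : ℤ) (m : ℕ)
    (hm : (ρ : ℤ) - τ = (m : ℤ) + 1) (hτ : τ ≤ -1)
    (e : nlev ρ ρ τ = nlev ρ ρ (τ + 1) + 1) :
    Prec (zfam ρ x y (τ + 1)) (zfam ρ x y τ ∘ Fin.cast e.symm) ↔ Prec (y m) (y (m + 1)) := by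
  apply prec_congr (show nlev ρ ρ (τ + 1) = m by unfold nlev; omega)
  · intro i hi hi'
    exact zfam_neg ρ hρ x y (τ + 1) (by omega) m (by omega) i hi hi'
  · intro i hi hi'
    exact zfam_neg ρ hρ x y τ (by omega) (m + 1) (by omega) i _ hi'

lemma mid_rel (ρ : ℕ) (hρ : 1 ≤ ρ) (x y : ∀ k : ℕ, Fin k → ℝ) (τ : ℤ) (t s : ℕ)
    (ht : τ = (t : ℤ)) (hst : ρ = t + s + 1) (e : nlev ρ ρ τ = nlev ρ ρ (τ + 1)) :
    PrecEq (zfam ρ x y τ) (zfam ρ x y (τ + 1) ∘ Fin.cast e) ↔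
      (Prec (y s) (y (s + 1)) ∧ Prec (x t) (x (t + 1)) ∧
        y (s + 1) ⟨s, by omega⟩ ≤ x (t + 1) ⟨0, by omega⟩) := by
  have hN : nlev ρ ρ τ = t + s + 1 := by unfold nlev; omega
  apply mid_iff s t _ hN x y
  · intro i hi
    by_cases h0 : t = 0
    · rw [dif_pos (show i < s + 1 by omega)]
      exact zfam_neg ρ hρ x y τ (by omega) (s + 1) (by omega) i hi (by omega)
    · by_cases hlt : i < s + 1
      · rw [dif_pos hlt]
        exact zfam_midy ρ x y τ (by omega) (by omega) (s + 1) (by omega) i hi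
          (by omega) (by omega)
      · rw [dif_neg hlt]
        exact (zfam_midx ρ x y τ (by omega) (by omega) t ht i hi (by omega) (by omega)).trans
          (fin_app_cast' x rfl (by omega) _ (by omega))
  · intro i hi
    show zfam ρ x y (τ + 1) _ = _
    by_cases hs : s = 0
    · rw [dif_neg (show ¬ i < s by omega)]
      exact (zfam_pos ρ x y (τ + 1) (by omega) (t + 1) (by omega) i _ (by omega)).trans
        (fin_app_cast' x rfl (by omega) _ (by omega))
    · by_cases hlt : i < s
      · rw [dif_pos hlt]
        exact zfam_midy ρ x y (τ + 1) (by omega) (by omega) s (by omega) i _ (by omega) hlt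
      · rw [dif_neg hlt]
        exact (zfam_midx ρ x y (τ + 1) (by omega) (by omega) (t + 1) (by omega) i _
            (by omega) (by omega)).trans
          (fin_app_cast' x rfl (by omega) _ (by omega))

/-- **Decomposition of double interlacing when `r = ρ`**: the family `(z^{(τ)})` built
from `x`, `y` as above is doubly interlacing on `ρ - n ≤ τ ≤ n` if and only if
(a) `x^{(1)} ≺ ⋯ ≺ x^{(n)}`, (b) `y^{(1)} ≺ ⋯ ≺ y^{(n)}` and
(c) `y^{(i)}_i ≤ x^{(ρ-i+1)}_1` for every `1 ≤ i ≤ ρ`. -/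
theorem double_interlacing_decomposition (ρ : ℕ) (hρ : 1 ≤ ρ) (n : ℕ) (hn : ρ ≤ n)
    (x y : ∀ k : ℕ, Fin k → ℝ) :
    (∀ τ : ℤ, (ρ : ℤ) - n ≤ τ → τ + 1 ≤ n →
        rel ρ ρ τ (zfam ρ x y τ) (zfam ρ x y (τ + 1)))
      ↔ ((∀ k : ℕ, 1 ≤ k → k + 1 ≤ n → Prec (x k) (x (k + 1))) ∧
         (∀ k : ℕ, 1 ≤ k → k + 1 ≤ n → Prec (y k) (y (k + 1))) ∧
         (∀ i : ℕ, ∀ h1 : 1 ≤ i, ∀ h2 : i ≤ ρ,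
            y i ⟨i - 1, by omega⟩ ≤ x (ρ - i + 1) ⟨0, by omega⟩)) := by
  constructor
  · intro H
    refine ⟨?_, ?_, ?_⟩
    · intro k hk hk1
      rcases le_or_gt ρ k with hkρ | hkρ
      · have hrel := H k (by omega) (by omega)
        rw [rel, if_neg (show ¬((k : ℤ) ≤ -1) by omega),
          if_neg (show ¬((k : ℤ) < (ρ : ℤ)) by omega)] at hrel
        obtain ⟨e, hp⟩ := hrel
        exact (pos_rel ρ x y k k rfl (by omega) e).mp hp
      · have hrel := H k (by omega) (by omega)
        rw [rel, if_neg (show ¬((k : ℤ) ≤ -1) by omega),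
          if_pos (show (k : ℤ) < (ρ : ℤ) by omega)] at hrel
        obtain ⟨e, hp⟩ := hrel
        exact ((mid_rel ρ hρ x y k k (ρ - 1 - k) rfl (by omega) e).mp hp).2.1
    · intro k hk hk1
      rcases le_or_gt ρ k with hkρ | hkρ
      · have hrel := H ((ρ : ℤ) - k - 1) (by omega) (by omega)
        rw [rel, if_pos (show (ρ : ℤ) - k - 1 ≤ -1 by omega)] at hrel
        obtain ⟨e, hp⟩ := hrel
        exact (neg_rel ρ hρ x y _ k (by omega) (by omega) e).mp hp
      · have hrel := H ((ρ : ℤ) - 1 - k) (by omega) (by omega)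
        rw [rel, if_neg (show ¬((ρ : ℤ) - 1 - k ≤ -1) by omega),
          if_pos (show (ρ : ℤ) - 1 - k < (ρ : ℤ) by omega)] at hrel
        obtain ⟨e, hp⟩ := hrel
        exact ((mid_rel ρ hρ x y _ (ρ - 1 - k) k (by omega) (by omega) e).mp hp).1
    · intro i h1 h2
      have hrel := H ((ρ : ℤ) - i) (by omega) (by omega)
      rw [rel, if_neg (show ¬((ρ : ℤ) - i ≤ -1) by omega),
        if_pos (show (ρ : ℤ) - i < (ρ : ℤ) by omega)] at hrel
      obtain ⟨e, hp⟩ := hrel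
      have hb := ((mid_rel ρ hρ x y _ (ρ - i) (i - 1) (by omega) (by omega) e).mp hp).2.2
      calc y i ⟨i - 1, by omega⟩ = y (i - 1 + 1) ⟨i - 1, by omega⟩ :=
            fin_app_cast' y (by omega) rfl _ _
        _ ≤ x (ρ - i + 1) ⟨0, by omega⟩ := hb
  · rintro ⟨ha, hb, hc⟩ τ hτ1 hτ2
    rw [rel]
    split_ifs with h1 h2
    · have e : nlev ρ ρ τ = nlev ρ ρ (τ + 1) + 1 := by unfold nlev; omega
      refine ⟨e, ?_⟩
      refine (neg_rel ρ hρ x y τ ((ρ : ℤ) - τ - 1).toNat (by omega) h1 e).mpr ?_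
      exact hb ((ρ : ℤ) - τ - 1).toNat (by omega) (by omega)
    · have e : nlev ρ ρ τ = nlev ρ ρ (τ + 1) := by unfold nlev; omega
      refine ⟨e, ?_⟩
      refine (mid_rel ρ hρ x y τ τ.toNat (ρ - 1 - τ.toNat) (by omega) (by omega) e).mpr
        ⟨?_, ?_, ?_⟩
      · rcases Nat.eq_zero_or_pos (ρ - 1 - τ.toNat) with hs | hs
        · rw [hs]; exact fun i => i.elim0
        · exact hb _ hs (by omega)
      · rcases Nat.eq_zero_or_pos τ.toNat with ht | ht
        · rw [ht]; exact fun i => i.elim0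
        · exact ha _ ht (by omega)
      · have h := hc (ρ - 1 - τ.toNat + 1) (by omega) (by omega)
        calc y (ρ - 1 - τ.toNat + 1) ⟨ρ - 1 - τ.toNat, by omega⟩
            = y (ρ - 1 - τ.toNat + 1) ⟨ρ - 1 - τ.toNat + 1 - 1, by omega⟩ :=
              fin_app_cast' y rfl (by omega) _ _
          _ ≤ x (ρ - (ρ - 1 - τ.toNat + 1) + 1) ⟨0, by omega⟩ := h
          _ = x (τ.toNat + 1) ⟨0, by omega⟩ := fin_app_cast' x (by omega) rfl _ _
    · have e : nlev ρ ρ (τ + 1) = nlev ρ ρ τ + 1 := by unfold nlev; omega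
      refine ⟨e, ?_⟩
      refine (pos_rel ρ x y τ τ.toNat (by omega) (by omega) e).mpr ?_
      exact ha τ.toNat (by omega) (by omega)
end

section
/- Resolution of a Fisher–Hartwig type singularity in Toeplitz determinants: let f : ℂ → ℂ be continuous on the unit circle, let κ ≥ 1 and n ≥ 1 be integers. Then D_n[ζ ↦ ζ^κ f(ζ)] = (−1)^{κn} (1/(2πi))^κ ∮_{|λ_1|=1} ⋯ ∮_{|λ_κ|=1} (∏_{j=1}^κ λ_j^{n−1} dλ_j) · D_n[ζ ↦ p_λ(ζ) f(ζ)], and D_n[ζ ↦ ζ^{−κ} f(ζ)] = (−1)^{κn} (1/(2πi))^κ ∮_{|λ_1|=1} ⋯ ∮_{|λ_κ|=1} (∏_{j=1}^κ λ_j^{n−1} dλ_j) · D_n[ζ ↦ p_λ(ζ^{−1}) f(ζ)], where p_λ(ζ) := ∏_{j=1}^κ (1 − ζ/λ_j). (The λ-contours may be taken to be circles about 0 of any positive radius; the integrand D_n[p_λ f] is a Laurent polynomial in the λ_j.) -/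
open MeasureTheory Complex

/-- The `k`-th Fourier coefficient of a function on the unit circle:
`ĝ_k = (1/(2πi)) ∮_{|ζ|=1} g(ζ) ζ^{-k-1} dζ`. -/
noncomputable def fourierCoef (g : ℂ → ℂ) (k : ℤ) : ℂ :=
  (1 / (2 * Real.pi * Complex.I)) * ∮ ζ in C(0, 1), g ζ * ζ ^ (-k - 1)

/-- The `n`-th Toeplitz determinant `D_n[g] = det ( ĝ_{i-j} )_{1 ≤ i,j ≤ n}`. -/
noncomputable def toeplitzDet (n : ℕ) (g : ℂ → ℂ) : ℂ :=
  Matrix.det (Matrix.of fun i j : Fin n => fourierCoef g ((i : ℤ) - (j : ℤ)))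

/-- The `κ`-fold contour integral over unit circles `|λ_j| = 1`, `j = 1, …, κ`
(each circle positively oriented, parametrized by `λ_j = e^{it_j}`, `dλ_j = i e^{it_j} dt_j`). -/
noncomputable def multiCircleInt (κ : ℕ) (F : (Fin κ → ℂ) → ℂ) : ℂ :=
  ∫ t in Set.univ.pi (fun _ : Fin κ => Set.Ioc (0 : ℝ) (2 * Real.pi)),
    (∏ j, (Complex.I * Complex.exp (Complex.I * (t j)))) *
      F (fun j => Complex.exp (Complex.I * (t j)))

/-- The polynomial `p_λ(ζ) = ∏_{j=1}^κ (1 - ζ/λ_j)`. -/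
noncomputable def pLam {κ : ℕ} (lam : Fin κ → ℂ) (ζ : ℂ) : ℂ :=
  ∏ j, (1 - ζ / lam j)

open Finset

/-!
Expanding `p_λ(w) = ∑_S (∏_{j ∈ S} -λ_j⁻¹) w^|S|` makes each Fourier coefficient of
`p_λ(ζ^{±1}) f` a combination of the shifted coefficients `f̂_{k ∓ |S|}`, so the Leibniz formula
writes `D_n[p_λ(ζ^{±1}) f]` as a sum, over permutations `σ` and choices of subsets
`T_1, …, T_n ⊆ {1, …, κ}`, of monomials `∏_j (-λ_j⁻¹)^#{i | j ∈ T_i}`. Against the weight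
`∏_j λ_j^(n-1)` the contour integral of such a monomial vanishes unless every exponent is `-1`,
i.e. unless every `T_i` is the full set. The surviving terms are the Leibniz expansion of
`D_n[ζ^{±κ} f]`, each weighted by `((-1)^n 2πi)^κ`.
-/

theorem fourierCoef_zpow_mul (g : ℂ → ℂ) (m k : ℤ) :
    fourierCoef (fun ζ => ζ ^ m * g ζ) k = fourierCoef g (k - m) := by
  unfold fourierCoef
  congr 1
  refine circleIntegral.integral_congr zero_le_one fun ζ hζ => ?_
  have hζ0 : ζ ≠ 0 := ne_zero_of_mem_sphere one_ne_zero ⟨ζ, hζ⟩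
  simp only [show -(k - m) - 1 = m + (-k - 1) by ring, zpow_add₀ hζ0]
  ring

theorem CircleIntegrable.mul_zpow {g : ℂ → ℂ} {R : ℝ} (hg : CircleIntegrable g 0 R) (m : ℤ) :
    CircleIntegrable (fun ζ => g ζ * ζ ^ m) 0 R := by
  rcases eq_or_ne R 0 with rfl | hR
  · exact circleIntegrable_zero_radius
  refine hg.fun_mul_continuousOn (continuousOn_id.zpow₀ m fun ζ hζ => Or.inl ?_)
  exact ne_zero_of_mem_sphere (abs_ne_zero.mpr hR) ⟨ζ, hζ⟩

theorem CircleIntegrable.zpow_mul {g : ℂ → ℂ} {R : ℝ} (hg : CircleIntegrable g 0 R) (m : ℤ) :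
    CircleIntegrable (fun ζ => ζ ^ m * g ζ) 0 R := by
  simpa only [mul_comm] using hg.mul_zpow m

theorem fourierCoef_sum {ι : Type*} (s : Finset ι) (c : ι → ℂ) {g : ι → ℂ → ℂ}
    (hg : ∀ a ∈ s, CircleIntegrable (g a) 0 1) (k : ℤ) :
    fourierCoef (fun ζ => ∑ a ∈ s, c a * g a ζ) k = ∑ a ∈ s, c a * fourierCoef (g a) k := by
  have hint : ∀ a ∈ s, CircleIntegrable (fun ζ => c a * (g a ζ * ζ ^ (-k - 1))) 0 1 :=
    fun a ha => ((hg a ha).mul_zpow _).fun_continuousOn_mul continuousOn_const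
  simp_rw [fourierCoef, sum_mul, mul_assoc, circleIntegral.integral_fun_sum hint,
    circleIntegral.integral_const_mul, mul_sum]
  exact sum_congr rfl fun a _ => mul_left_comm _ _ _

theorem pLam_eq_sum {κ : ℕ} (lam : Fin κ → ℂ) (w : ℂ) :
    pLam lam w = ∑ S : Finset (Fin κ), (∏ j ∈ S, -(lam j)⁻¹) * w ^ S.card := by
  have h : ∀ j, 1 - w / lam j = 1 + -(lam j)⁻¹ * w := fun j => by ring
  simp only [pLam, h, prod_one_add, powerset_univ, prod_mul_distrib,
    prod_const]

theorem fourierCoef_pLam_zpow_mul {κ : ℕ} {f : ℂ → ℂ} (hf : CircleIntegrable f 0 1)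
    (lam : Fin κ → ℂ) (s k : ℤ) :
    fourierCoef (fun ζ => pLam lam (ζ ^ s) * f ζ) k
      = ∑ S : Finset (Fin κ), (∏ j ∈ S, -(lam j)⁻¹) * fourierCoef f (k - s * S.card) := by
  have h : ∀ ζ : ℂ, pLam lam (ζ ^ s) * f ζ
      = ∑ S : Finset (Fin κ), (∏ j ∈ S, -(lam j)⁻¹) * (ζ ^ (s * S.card) * f ζ) := fun ζ => by
    simp only [pLam_eq_sum, sum_mul, zpow_mul, zpow_natCast, mul_assoc]
  simp only [h, fourierCoef_sum _ _ (fun S _ => hf.zpow_mul _), fourierCoef_zpow_mul]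

theorem toeplitzDet_pLam_zpow_mul {κ n : ℕ} {f : ℂ → ℂ} (hf : CircleIntegrable f 0 1)
    (lam : Fin κ → ℂ) (s : ℤ) :
    toeplitzDet n (fun ζ => pLam lam (ζ ^ s) * f ζ)
      = ∑ σ : Equiv.Perm (Fin n), ∑ T : Fin n → Finset (Fin κ),
          (((Equiv.Perm.sign σ : ℤ) : ℂ) *
            ∏ i, fourierCoef f ((σ i : ℤ) - (i : ℤ) - s * (T i).card)) *
          ∏ i, ∏ j ∈ T i, -(lam j)⁻¹ := by
  simp only [toeplitzDet, Matrix.det_apply', Matrix.of_apply, fourierCoef_pLam_zpow_mul hf,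
    prod_univ_sum, Fintype.piFinset_univ, mul_sum, prod_mul_distrib]
  refine sum_congr rfl fun σ _ => sum_congr rfl fun T _ => by ring

theorem circleIntegral_eq_integral_exp (g : ℂ → ℂ) :
    (∮ z in C(0, 1), g z)
      = ∫ t in Set.Ioc (0 : ℝ) (2 * Real.pi), I * exp (I * t) * g (exp (I * t)) := by
  simp only [circleIntegral, deriv_circleMap, circleMap_zero, ofReal_one, one_mul,
    smul_eq_mul, intervalIntegral.integral_of_le Real.two_pi_pos.le]
  refine setIntegral_congr_fun measurableSet_Ioc fun t _ => ?_
  simp only [mul_comm (t : ℂ) I]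
  ring

theorem multiCircleInt_prod {κ : ℕ} (g : Fin κ → ℂ → ℂ) :
    multiCircleInt κ (fun lam => ∏ j, g j (lam j)) = ∏ j, ∮ z in C(0, 1), g j z := by
  simp only [multiCircleInt, circleIntegral_eq_integral_exp, ← prod_mul_distrib,
    volume_pi, Measure.restrict_pi_pi]
  exact integral_fintype_prod_eq_prod fun j (t : ℝ) => I * exp (I * t) * g j (exp (I * t))

theorem multiCircleInt_const_mul {κ : ℕ} (c : ℂ) (F : (Fin κ → ℂ) → ℂ) :
    multiCircleInt κ (fun lam => c * F lam) = c * multiCircleInt κ F := by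
  simp only [multiCircleInt, mul_left_comm _ c, integral_const_mul]

theorem multiCircleInt_sum {κ : ℕ} {ι : Type*} (s : Finset ι) (F : ι → (Fin κ → ℂ) → ℂ)
    (hF : ∀ a ∈ s, Continuous fun t : Fin κ → ℝ => F a fun j => exp (I * t j)) :
    multiCircleInt κ (fun lam => ∑ a ∈ s, F a lam) = ∑ a ∈ s, multiCircleInt κ (F a) := by
  simp only [multiCircleInt, mul_sum]
  refine integral_finsetSum s fun a ha => ?_
  have hcont : Continuous fun t : Fin κ → ℝ =>
      (∏ j, I * exp (I * t j)) * F a fun j => exp (I * t j) :=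
    (continuous_finsetProd _ fun j _ => by fun_prop).mul (hF a ha)
  exact (hcont.continuousOn.integrableOn_compact (isCompact_univ_pi fun _ => isCompact_Icc)
    ).mono_set (Set.pi_mono fun _ _ => Set.Ioc_subset_Icc_self)

theorem circleIntegral_pow_mul_neg_inv_pow {n : ℕ} (hn : 1 ≤ n) (c : ℕ) :
    (∮ z in C(0, 1), z ^ (n - 1) * (-z⁻¹) ^ c)
      = if c = n then (-1) ^ n * (2 * Real.pi * I) else 0 := by
  have h : Set.EqOn (fun z : ℂ => z ^ (n - 1) * (-z⁻¹) ^ c)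
      (fun z => (-1) ^ c * (z - 0) ^ ((n : ℤ) - 1 - c)) (Metric.sphere 0 1) := by
    intro z hz
    have hz0 : z ≠ 0 := ne_zero_of_mem_sphere one_ne_zero ⟨z, hz⟩
    beta_reduce
    rw [show (n : ℤ) - 1 - c = ((n - 1 : ℕ) : ℤ) - c by push_cast [Nat.cast_sub hn]; ring,
      sub_zero, zpow_sub₀ hz0, zpow_natCast, zpow_natCast, neg_pow, inv_pow]
    ring
  rw [circleIntegral.integral_congr zero_le_one h, circleIntegral.integral_const_mul]
  split_ifs with hc
  · simp only [hc, show (n : ℤ) - 1 - n = -1 by ring, zpow_neg_one,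
      circleIntegral.integral_sub_center_inv 0 one_ne_zero]
  · rw [circleIntegral.integral_sub_zpow_of_ne (by omega), mul_zero]

theorem prod_prod_mem_eq_prod_pow_card {ι α M : Type*} [Fintype ι] [Fintype α] [DecidableEq α]
    [CommMonoid M] (T : ι → Finset α) (g : α → M) :
    ∏ i, ∏ j ∈ T i, g j = ∏ j, g j ^ #{i | j ∈ T i} := by
  calc ∏ i, ∏ j ∈ T i, g j = ∏ i, ∏ j, if j ∈ T i then g j else 1 := by
        simp only [prod_ite_mem, univ_inter]
    _ = ∏ j, ∏ i, if j ∈ T i then g j else 1 := prod_comm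
    _ = ∏ j, g j ^ #{i | j ∈ T i} := by
        simp only [prod_ite, prod_const, one_pow, mul_one]

theorem forall_card_filter_mem_eq_card_iff {ι α : Type*} [Fintype ι] [Fintype α] [DecidableEq α]
    (T : ι → Finset α) :
    (∀ j, #{i | j ∈ T i} = Fintype.card ι) ↔ T = fun _ => univ := by
  simp only [card_eq_iff_eq_univ, funext_iff, eq_univ_iff_forall, mem_filter_univ]
  exact forall_comm

theorem multiCircleInt_prod_pow_mul_prod_prod_neg_inv {κ n : ℕ} (hn : 1 ≤ n)
    (T : Fin n → Finset (Fin κ)) :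
    multiCircleInt κ (fun lam => (∏ j, lam j ^ (n - 1)) * ∏ i, ∏ j ∈ T i, -(lam j)⁻¹)
      = if T = (fun _ => univ) then ((-1) ^ n * (2 * Real.pi * I)) ^ κ else 0 := by
  simp only [prod_prod_mem_eq_prod_pow_card, ← prod_mul_distrib]
  rw [multiCircleInt_prod fun j z => z ^ (n - 1) * (-z⁻¹) ^ #{i | j ∈ T i}]
  simp only [circleIntegral_pow_mul_neg_inv_pow hn, Fintype.prod_ite_zero, prod_const,
    card_univ, Fintype.card_fin]
  congr 1
  simpa using forall_card_filter_mem_eq_card_iff T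

theorem multiCircleInt_pow_mul_toeplitzDet_pLam_zpow_mul {κ n : ℕ} {f : ℂ → ℂ}
    (hf : CircleIntegrable f 0 1) (hn : 1 ≤ n) (s : ℤ) :
    multiCircleInt κ (fun lam =>
        (∏ j, lam j ^ (n - 1)) * toeplitzDet n (fun ζ => pLam lam (ζ ^ s) * f ζ))
      = ((-1) ^ n * (2 * Real.pi * I)) ^ κ * toeplitzDet n (fun ζ => ζ ^ (s * κ) * f ζ) := by
  have hcont : ∀ (c : ℂ) (T : Fin n → Finset (Fin κ)), Continuous fun t : Fin κ → ℝ =>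
      c * ((∏ j, exp (I * t j) ^ (n - 1)) * ∏ i, ∏ j ∈ T i, -(exp (I * t j))⁻¹) := by
    intro c T
    fun_prop (disch := exact fun _ => exp_ne_zero _)
  simp only [toeplitzDet_pLam_zpow_mul hf, mul_sum, mul_left_comm (∏ j, _ ^ (n - 1))]
  rw [multiCircleInt_sum]
  swap
  · exact fun σ _ => continuous_finsetSum _ fun T _ => hcont _ T
  simp only [toeplitzDet, Matrix.det_apply', Matrix.of_apply, fourierCoef_zpow_mul, mul_sum]
  refine sum_congr rfl fun σ _ => ?_
  rw [multiCircleInt_sum]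
  swap
  · exact fun T _ => hcont _ T
  simp only [multiCircleInt_const_mul,
    multiCircleInt_prod_pow_mul_prod_prod_neg_inv hn, mul_ite, mul_zero, sum_ite_eq', mem_univ,
    if_true, card_univ, Fintype.card_fin]
  ring

theorem toeplitzDet_zpow_mul_eq_multiCircleInt {κ n : ℕ} {f : ℂ → ℂ}
    (hf : CircleIntegrable f 0 1) (hn : 1 ≤ n) (s : ℤ) :
    toeplitzDet n (fun ζ => ζ ^ (s * κ) * f ζ)
      = (-1) ^ (κ * n) * (1 / (2 * Real.pi * I)) ^ κ *
          multiCircleInt κ (fun lam =>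
            (∏ j, lam j ^ (n - 1)) * toeplitzDet n (fun ζ => pLam lam (ζ ^ s) * f ζ)) := by
  have h2πI : (2 * Real.pi * I : ℂ) ≠ 0 := by simp [Real.pi_ne_zero, I_ne_zero]
  rw [multiCircleInt_pow_mul_toeplitzDet_pLam_zpow_mul hf hn, mul_pow, ← pow_mul, mul_comm n κ,
    one_div]
  generalize 2 * Real.pi * I = x at h2πI ⊢
  symm
  calc _ = (-1) ^ (κ * n) * (-1) ^ (κ * n) * (x⁻¹ * x) ^ κ *
        toeplitzDet n (fun ζ => ζ ^ (s * κ) * f ζ) := by ring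
    _ = _ := by
      rw [← mul_pow, neg_one_mul, neg_neg, inv_mul_cancel₀ h2πI, one_pow, one_pow, one_mul, one_mul]

theorem fisher_hartwig_resolution_general (f : ℂ → ℂ)
    (hf : ContinuousOn f (Metric.sphere (0 : ℂ) 1))
    (κ n : ℕ) (hn : 1 ≤ n) :
    toeplitzDet n (fun ζ => ζ ^ κ * f ζ)
        = (-1) ^ (κ * n) * (1 / (2 * Real.pi * Complex.I)) ^ κ *
            multiCircleInt κ (fun lam =>
              (∏ j, lam j ^ (n - 1)) * toeplitzDet n (fun ζ => pLam lam ζ * f ζ)) ∧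
    toeplitzDet n (fun ζ => ζ ^ (-(κ : ℤ)) * f ζ)
        = (-1) ^ (κ * n) * (1 / (2 * Real.pi * Complex.I)) ^ κ *
            multiCircleInt κ (fun lam =>
              (∏ j, lam j ^ (n - 1)) * toeplitzDet n (fun ζ => pLam lam ζ⁻¹ * f ζ)) := by
  have hf' := hf.circleIntegrable zero_le_one
  constructor
  · simpa only [zpow_one, one_mul, zpow_natCast] using
      toeplitzDet_zpow_mul_eq_multiCircleInt hf' hn 1
  · simpa only [zpow_neg_one, neg_mul, one_mul] using
      toeplitzDet_zpow_mul_eq_multiCircleInt hf' hn (-1)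

/-- **Resolution of a Fisher–Hartwig type singularity in Toeplitz determinants**
(Lemma 4.2 in Adler–Johansson–van Moerbeke): for `f` continuous on the unit circle and
integers `κ, n ≥ 1`,
`D_n[ζ^{±κ} f(ζ)] = (-1)^{κn} (1/(2πi))^κ ∮⋯∮ (∏ λ_j^{n-1} dλ_j) · D_n[p_λ(ζ^{±1}) f(ζ)]`. -/
theorem fisher_hartwig_resolution (f : ℂ → ℂ)
    (hf : ContinuousOn f (Metric.sphere (0 : ℂ) 1))
    (κ n : ℕ) (hκ : 1 ≤ κ) (hn : 1 ≤ n) :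
    toeplitzDet n (fun ζ => ζ ^ κ * f ζ)
        = (-1) ^ (κ * n) * (1 / (2 * Real.pi * Complex.I)) ^ κ *
            multiCircleInt κ (fun lam =>
              (∏ j, lam j ^ (n - 1)) * toeplitzDet n (fun ζ => pLam lam ζ * f ζ)) ∧
    toeplitzDet n (fun ζ => ζ ^ (-(κ : ℤ)) * f ζ)
        = (-1) ^ (κ * n) * (1 / (2 * Real.pi * Complex.I)) ^ κ *
            multiCircleInt κ (fun lam =>
              (∏ j, lam j ^ (n - 1)) * toeplitzDet n (fun ζ => pLam lam ζ⁻¹ * f ζ)) :=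
  fisher_hartwig_resolution_general f hf κ n hn
end

section
/- Exchange of contour integration with a rank-one perturbed determinant: let N ≥ 1, let K be a complex N×N matrix, let r₁, r₂ > 0, let F (resp. G) be a continuous complex-valued function on the circle |z| = r₁ (resp. |w| = r₂), and let z ↦ a^z ∈ ℂ^N and w ↦ b^w ∈ ℂ^N be continuous on those circles. Then (1/(2πi))² ∮_{|z|=r₁} (dz/z) ∮_{|w|=r₂} (dw/w) F(z) G(w) det( I − K + a^z ⊗ b^w ) = det( I − K + Ā ⊗ B̄ ) + ( F̄ · Ḡ − 1 ) · det( I − K ), where Ā := (1/(2πi)) ∮_{|z|=r₁} F(z) a^z dz/z, B̄ := (1/(2πi)) ∮_{|w|=r₂} G(w) b^w dw/w, F̄ := (1/(2πi)) ∮_{|z|=r₁} F(z) dz/z, and Ḡ := (1/(2πi)) ∮_{|w|=r₂} G(w) dw/w. (This is the finite-dimensional case of Johansson's lemma for trace-class operators.) -/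
/-!
By the matrix determinant lemma, `det (M + u ⊗ v) = det M + v ⬝ᵥ adj M u`, so the integrand is a
finite sum of products `f(z) g(w)` of functions of one variable. The iterated circle integral of
such a sum is the sum of the products of the single integrals, and folding the result back with the
determinant lemma gives the right-hand side. The determinant lemma is the Schur complement formula
when `M` is invertible; it extends to all `M` by continuity, since `M + t • 1` is invertible for all
but finitely many `t`.
-/

open Matrix

namespace Matrix

variable {n : Type*} [Fintype n] [DecidableEq n]

theorem det_add_vecMulVec_of_isUnit {R : Type*} [CommRing R] {M : Matrix n n R}
    (hM : IsUnit M.det) (u v : n → R) :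
    (M + vecMulVec u v).det = M.det + v ⬝ᵥ (M.adjugate *ᵥ u) := by
  rw [vecMulVec_eq Unit, det_add_replicateCol_mul_replicateRow hM, Matrix.mul_assoc,
    ← replicateCol_mulVec, det_unique (1 + replicateRow Unit v * replicateCol Unit (M⁻¹ *ᵥ u)),
    add_apply, one_apply_eq, replicateRow_mul_replicateCol_apply, inv_def, smul_mulVec,
    dotProduct_smul, smul_eq_mul, mul_add, mul_one, ← mul_assoc, Ring.mul_inverse_cancel _ hM, one_mul]

theorem det_add_vecMulVec {𝕜 : Type*} [NontriviallyNormedField 𝕜] [CompleteSpace 𝕜]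
    (M : Matrix n n 𝕜) (u v : n → 𝕜) :
    (M + vecMulVec u v).det = M.det + v ⬝ᵥ (M.adjugate *ᵥ u) := by
  let Mt : 𝕜 → Matrix n n 𝕜 := fun t => t • 1 + M
  have hsingular : {t | ¬ IsUnit (Mt t).det}.Finite := by
    refine ((-M).charpoly.finite_setOfPred_isRoot (charpoly_monic _).ne_zero).subset
      fun t ht => ?_
    simpa [Polynomial.IsRoot, eval_charpoly, Mt, sub_neg_eq_add, smul_one_eq_diagonal] using ht
  have heq := Continuous.ext_on (hsingular.countable.dense_compl 𝕜)
    (f := fun t => (Mt t + vecMulVec u v).det)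
    (g := fun t => (Mt t).det + v ⬝ᵥ ((Mt t).adjugate *ᵥ u)) (by fun_prop) (by fun_prop)
    fun t ht => det_add_vecMulVec_of_isUnit (not_not.mp ht) u v
  simpa [Mt] using congrFun heq 0

end Matrix

theorem circleIntegral_circleIntegral_sum_mul {ι : Type*} (s : Finset ι) {f g : ι → ℂ → ℂ}
    {c₁ c₂ : ℂ} {R₁ R₂ : ℝ} (hf : ∀ k ∈ s, CircleIntegrable (f k) c₁ R₁)
    (hg : ∀ k ∈ s, CircleIntegrable (g k) c₂ R₂) :
    (∮ z in C(c₁, R₁), ∮ w in C(c₂, R₂), ∑ k ∈ s, f k z * g k w)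
      = ∑ k ∈ s, (∮ z in C(c₁, R₁), f k z) * ∮ w in C(c₂, R₂), g k w := calc
  _ = ∮ z in C(c₁, R₁), ∑ k ∈ s, f k z * ∮ w in C(c₂, R₂), g k w := by
    congr! 2 with z
    rw [circleIntegral.integral_fun_sum (f := fun k w => f k z * g k w)
      fun k hk => (hg k hk).const_fun_smul]
    simp only [circleIntegral.integral_const_mul]
  _ = _ := by
    rw [circleIntegral.integral_fun_sum (f := fun k z => f k z * ∮ w in C(c₂, R₂), g k w)
      fun k hk => (hf k hk).mul_const _]
    simp only [← smul_eq_mul, circleIntegral.integral_smul_const]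

theorem circleIntegrable_div_id {f : ℂ → ℂ} {R : ℝ} (hR : 0 < R)
    (hf : ContinuousOn f (Metric.sphere 0 R)) : CircleIntegrable (fun z => f z / z) 0 R :=
  (hf.div continuousOn_id fun _ hz => Metric.ne_of_mem_sphere hz hR.ne').circleIntegrable hR.le

theorem circleIntegral_circleIntegral_det_add_vecMulVec {n : Type*} [Fintype n] [DecidableEq n]
    (M : Matrix n n ℂ) {r₁ r₂ : ℝ} (h₁ : 0 < r₁) (h₂ : 0 < r₂) {F G : ℂ → ℂ} {a b : ℂ → n → ℂ}
    (hF : ContinuousOn F (Metric.sphere 0 r₁)) (hG : ContinuousOn G (Metric.sphere 0 r₂))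
    (ha : ContinuousOn a (Metric.sphere 0 r₁)) (hb : ContinuousOn b (Metric.sphere 0 r₂)) :
    (∮ z in C(0, r₁), (∮ w in C(0, r₂), F z * G w * (M + vecMulVec (a z) (b w)).det / w) / z)
      = M.det * (∮ z in C(0, r₁), F z / z) * (∮ w in C(0, r₂), G w / w)
        + (fun j => ∮ w in C(0, r₂), G w * b w j / w)
          ⬝ᵥ (M.adjugate *ᵥ fun i => ∮ z in C(0, r₁), F z * a z i / z) := by
  -- `none` indexes the term `det M`, `some (j, i)` the term `adj M j i * a z i * b w j`.
  let f : Option (n × n) → ℂ → ℂ := fun k z =>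
    k.elim (M.det * (F z / z)) fun ji => M.adjugate ji.1 ji.2 * (F z * a z ji.2 / z)
  let g : Option (n × n) → ℂ → ℂ := fun k w =>
    k.elim (G w / w) fun ji => G w * b w ji.1 / w
  have hf : ∀ k, CircleIntegrable (f k) 0 r₁ := by
    rintro (_ | ⟨j, i⟩)
    · exact (circleIntegrable_div_id h₁ hF).const_fun_smul
    · exact (circleIntegrable_div_id h₁
        (hF.mul ((continuous_apply i).comp_continuousOn ha))).const_fun_smul
  have hg : ∀ k, CircleIntegrable (g k) 0 r₂ := by
    rintro (_ | ⟨j, i⟩)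
    · exact circleIntegrable_div_id h₂ hG
    · exact circleIntegrable_div_id h₂ (hG.mul ((continuous_apply j).comp_continuousOn hb))
  have hseparate : ∀ z w, F z * G w * (M + vecMulVec (a z) (b w)).det / w / z
      = ∑ k, f k z * g k w := by
    intro z w
    rw [det_add_vecMulVec, Fintype.sum_option, Fintype.sum_prod_type]
    simp only [f, g, Option.elim, dotProduct, mulVec, Finset.mul_sum, Finset.sum_div, mul_add,
      add_div]
    congr 1
    · ring
    · exact Finset.sum_congr rfl fun j _ => Finset.sum_congr rfl fun i _ => by ring
  calc _ = ∮ z in C(0, r₁), ∮ w in C(0, r₂), ∑ k, f k z * g k w := by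
        congr 1 with z
        simp only [← hseparate, div_eq_inv_mul _ z, ← circleIntegral.integral_const_mul]
    _ = ∑ k, (∮ z in C(0, r₁), f k z) * ∮ w in C(0, r₂), g k w :=
        circleIntegral_circleIntegral_sum_mul _ (fun k _ => hf k) fun k _ => hg k
    _ = _ := by
        simp only [Fintype.sum_option, Fintype.sum_prod_type, f, g, Option.elim,
          circleIntegral.integral_const_mul, dotProduct, mulVec, Finset.mul_sum]
        congr 1
        exact Finset.sum_congr rfl fun j _ => Finset.sum_congr rfl fun i _ => by ring

theorem johansson_exchange_lemma_general
    (N : ℕ) (K : Matrix (Fin N) (Fin N) ℂ)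
    (r₁ r₂ : ℝ) (h₁ : 0 < r₁) (h₂ : 0 < r₂)
    (F G : ℂ → ℂ) (a b : ℂ → Fin N → ℂ)
    (hF : ContinuousOn F (Metric.sphere (0 : ℂ) r₁))
    (hG : ContinuousOn G (Metric.sphere (0 : ℂ) r₂))
    (ha : ContinuousOn a (Metric.sphere (0 : ℂ) r₁))
    (hb : ContinuousOn b (Metric.sphere (0 : ℂ) r₂)) :
    (1 / (2 * Real.pi * Complex.I)) ^ 2 *
        (∮ z in C(0, r₁), (∮ w in C(0, r₂),
          F z * G w * (1 - K + vecMulVec (a z) (b w)).det / w) / z)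
      = (1 - K + vecMulVec
            (fun i => (1 / (2 * Real.pi * Complex.I)) * ∮ z in C(0, r₁), F z * a z i / z)
            (fun i => (1 / (2 * Real.pi * Complex.I)) * ∮ w in C(0, r₂), G w * b w i / w)).det
        + (((1 / (2 * Real.pi * Complex.I)) * ∮ z in C(0, r₁), F z / z) *
             ((1 / (2 * Real.pi * Complex.I)) * ∮ w in C(0, r₂), G w / w) - 1) *
            (1 - K).det := by
  rw [circleIntegral_circleIntegral_det_add_vecMulVec (1 - K) h₁ h₂ hF hG ha hb,
    det_add_vecMulVec]
  simp only [dotProduct, mulVec, Finset.mul_sum, mul_add]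
  rw [add_right_comm]
  congr 1
  · ring
  · exact Finset.sum_congr rfl fun j _ => Finset.sum_congr rfl fun i _ => by ring

/-- **Johansson's exchange lemma (finite-dimensional case)**: contour integration against
a rank-one perturbed determinant can be exchanged with the determinant:
`(1/(2πi))² ∮∮ (dz/z)(dw/w) F(z) G(w) det(I - K + a^z ⊗ b^w)
  = det(I - K + Ā ⊗ B̄) + (F̄·Ḡ - 1)·det(I - K)`,
where `Ā, B̄, F̄, Ḡ` are the corresponding circle averages. -/
theorem johansson_exchange_lemma
    (N : ℕ) (hN : 1 ≤ N) (K : Matrix (Fin N) (Fin N) ℂ)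
    (r₁ r₂ : ℝ) (h₁ : 0 < r₁) (h₂ : 0 < r₂)
    (F G : ℂ → ℂ) (a b : ℂ → Fin N → ℂ)
    (hF : ContinuousOn F (Metric.sphere (0 : ℂ) r₁))
    (hG : ContinuousOn G (Metric.sphere (0 : ℂ) r₂))
    (ha : ContinuousOn a (Metric.sphere (0 : ℂ) r₁))
    (hb : ContinuousOn b (Metric.sphere (0 : ℂ) r₂)) :
    (1 / (2 * Real.pi * Complex.I)) ^ 2 *
        (∮ z in C(0, r₁), (∮ w in C(0, r₂),
          F z * G w * (1 - K + vecMulVec (a z) (b w)).det / w) / z)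
      = (1 - K + vecMulVec
            (fun i => (1 / (2 * Real.pi * Complex.I)) * ∮ z in C(0, r₁), F z * a z i / z)
            (fun i => (1 / (2 * Real.pi * Complex.I)) * ∮ w in C(0, r₂), G w * b w i / w)).det
        + (((1 / (2 * Real.pi * Complex.I)) * ∮ z in C(0, r₁), F z / z) *
             ((1 / (2 * Real.pi * Complex.I)) * ∮ w in C(0, r₂), G w / w) - 1) *
            (1 - K).det :=
  johansson_exchange_lemma_general N K r₁ r₂ h₁ h₂ F G a b hF hG ha hb
end

section
/- Enumeration of chains of partitions by horizontal strips (skew Jacobi–Trudi at the principal specialization): let n ≥ 1 and N ≥ 0 be integers and let λ = (λ_1 ≥ ⋯ ≥ λ_n ≥ 0) and μ = (μ_1 ≥ ⋯ ≥ μ_n ≥ 0) be partitions with at most n parts. Then the number of sequences of partitions (ν^{(0)}, ν^{(1)}, …, ν^{(N)}) with ν^{(0)} = μ, ν^{(N)} = λ, and such that for each 1 ≤ m ≤ N the skew diagram ν^{(m)}∖ν^{(m−1)} is a horizontal strip (i.e. ν^{(m−1)}_i ≤ ν^{(m)}_i and ν^{(m)}_{i+1} ≤ ν^{(m−1)}_i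 for all i ≥ 1) equals det( h_{λ_i − i − μ_j + j} )_{1 ≤ i, j ≤ n}, where h_r := binom(N + r − 1, r) for r ≥ 0 and h_r := 0 for r < 0. -/
/-- Extend a partition given as a vector `Fin n → ℕ` by zeros to a function `ℕ → ℕ`. -/
def extendPartition {n : ℕ} (lam : Fin n → ℕ) (i : ℕ) : ℕ :=
  if h : i < n then lam ⟨i, h⟩ else 0

/-- `h_r = binom (N + r - 1) r` for `r ≥ 0` (the number of monomials of degree `r` in
`N` variables, i.e. the complete homogeneous symmetric polynomial of degree `r` at
`N` variables all equal to `1`), and `h_r = 0` for `r < 0`. -/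
def hCoef (N : ℕ) (r : ℤ) : ℕ :=
  if 0 ≤ r then Nat.choose (N + r.toNat - 1) r.toNat else 0

/-!
Induction on `N`. Deleting the last partition of a chain shows that the chains of length `N + 1`
ending at `λ` are counted by the chains of length `N` ending at the partitions `κ` for which
`λ / κ` is a horizontal strip, i.e. `λ_{i+1} ≤ κ_i ≤ λ_i`. The determinant obeys the same
recursion: by Pascal's rule `h^{(N+1)}_r - h^{(N+1)}_{r-1} = h^{(N)}_r`, telescoping shows that
row `i` of the matrix for `N + 1` is the sum over `k ≥ i` of the rows
`(∑_{λ_{k+1} ≤ c ≤ λ_k} h^{(N)}_{c - k - μ_j + j})_j`, and multilinearity of the determinant in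
its rows turns this into the sum over `κ`. At `N = 0` the matrix is `[λ_i - i = μ_j - j]`; both
sequences are strictly decreasing, so its determinant is `[λ = μ]`.
-/

open Finset Matrix

namespace SkewJacobiTrudi

section Determinant

variable {m R : Type*} [Fintype m] [DecidableEq m] [CommRing R]

lemma det_of_sum_ge_rows [LinearOrder m] (M : Matrix m m R) :
    det (of fun i j => ∑ k, if i ≤ k then M k j else 0) = det M := by
  let T : Matrix m m R := of fun i k => if i ≤ k then 1 else 0
  have hT : T.IsUpperTriangular := fun i k hki => if_neg (not_le.mpr hki)
  have hprod : (of fun i j => ∑ k, if i ≤ k then M k j else 0) = T * M := by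
    ext i j
    simp [T, Matrix.mul_apply, ite_mul]
  rw [hprod, det_mul, det_of_isUpperTriangular hT]
  simp [T]

lemma det_of_sum_finset_rows {ι : Type*} (s : m → Finset ι) (v : m → ι → m → R) :
    det (of fun k j => ∑ c ∈ s k, v k c j) =
      ∑ f ∈ Fintype.piFinset s, det (of fun k => v k (f k)) := by
  have := (detRowAlternating : (m → R) [⋀^m]→ₗ[R] R).toMultilinearMap.map_sum_finset v s
  simp only [Finset.sum_fn] at this
  exact this

lemma det_of_ite_eq_of_strictAnti {α : Type*} [LinearOrder m] [LinearOrder α] {a b : m → α}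
    (ha : StrictAnti a) (hb : StrictAnti b) :
    det (of fun i j => if a i = b j then (1 : R) else 0) = if a = b then 1 else 0 := by
  by_cases hab : a = b
  · subst hab
    have : (of fun i j => if a i = a j then (1 : R) else 0) = 1 := by
      ext i j
      simp [Matrix.one_apply, ha.injective.eq_iff]
    rw [this, det_one, if_pos rfl]
  · rw [if_neg hab, det_apply]
    refine sum_eq_zero fun σ _ => ?_
    obtain ⟨i, hi⟩ : ∃ i, a (σ i) ≠ b i := by
      by_contra! h
      have hσ : StrictMono σ := fun x y hxy => ha.lt_iff_gt.mp (by rw [h, h]; exact hb hxy)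
      have hid : ⇑σ = id := (hσ.range_inj strictMono_id).mp (by simp [σ.surjective.range_eq])
      exact hab (funext fun i => by simpa [hid] using h i)
    rw [prod_eq_zero (mem_univ i) (by simp [hi]), smul_zero]

end Determinant

variable {n : ℕ}

lemma extendPartition_coe (lam : Fin n → ℕ) (i : Fin n) : extendPartition lam i = lam i := by
  simp [extendPartition]

lemma extendPartition_of_le (lam : Fin n → ℕ) {i : ℕ} (h : n ≤ i) : extendPartition lam i = 0 := by
  simp [extendPartition, h]

lemma extendPartition_injective : Function.Injective (extendPartition (n := n)) :=
  fun lam mu h => funext fun i => by simpa [extendPartition_coe] using congrFun h i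

lemma antitone_extendPartition_iff {lam : Fin n → ℕ} :
    Antitone (extendPartition lam) ↔ Antitone lam := by
  refine ⟨fun h i j hij => ?_, fun h i j hij => ?_⟩
  · simpa [extendPartition_coe] using h (Fin.le_def.mp hij)
  · by_cases hj : j < n
    · have hi : i < n := hij.trans_lt hj
      simpa [extendPartition, hi, hj] using h (show (⟨i, hi⟩ : Fin n) ≤ ⟨j, hj⟩ from hij)
    · simp [extendPartition_of_le lam (not_lt.mp hj)]

lemma eq_extendPartition_of_le {f : ℕ → ℕ} {lam : Fin n → ℕ}
    (h : ∀ i, f i ≤ extendPartition lam i) : f = extendPartition fun i : Fin n => f i := by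
  funext i
  by_cases hi : i < n
  · simp [extendPartition, hi]
  · simpa [extendPartition_of_le _ (not_lt.mp hi)] using h i

lemma hCoef_of_neg (N : ℕ) {r : ℤ} (h : r < 0) : hCoef N r = 0 := by
  simp [hCoef, not_le.mpr h]

lemma hCoef_natCast (N t : ℕ) : hCoef N t = (N + t - 1).choose t := by
  simp [hCoef]

lemma hCoef_zero_left (r : ℤ) : hCoef 0 r = if r = 0 then 1 else 0 := by
  rcases lt_trichotomy r 0 with h | rfl | h
  · simp [hCoef_of_neg 0 h, h.ne]
  · simp [hCoef]
  · lift r to ℕ using h.le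
    simp only [hCoef_natCast, zero_add, Nat.cast_eq_zero, show r ≠ 0 by omega, if_false]
    exact Nat.choose_eq_zero_of_lt (by omega)

lemma hCoef_succ_left (N : ℕ) (r : ℤ) :
    hCoef (N + 1) r = hCoef (N + 1) (r - 1) + hCoef N r := by
  rcases lt_trichotomy r 0 with h | rfl | h
  · simp [hCoef_of_neg _ h, hCoef_of_neg _ (show r - 1 < 0 by omega)]
  · simp [hCoef]
  · obtain ⟨t, rfl⟩ : ∃ t : ℕ, r = (t + 1 : ℕ) := ⟨(r - 1).toNat, by omega⟩
    rw [show ((t + 1 : ℕ) : ℤ) - 1 = t by push_cast; ring, hCoef_natCast, hCoef_natCast,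
      hCoef_natCast, show N + 1 + (t + 1) - 1 = N + t + 1 by omega,
      show N + 1 + t - 1 = N + t by omega, show N + (t + 1) - 1 = N + t by omega,
      Nat.choose_succ_succ]

lemma sum_Icc_hCoef (N : ℕ) (e : ℤ) {a b : ℕ} (hab : a ≤ b) :
    ∑ c ∈ Icc a b, (hCoef N (c + e) : ℤ) =
      hCoef (N + 1) (b + e) - hCoef (N + 1) (a - 1 + e) := by
  set F : ℕ → ℤ := fun c => hCoef (N + 1) ((c : ℤ) - 1 + e)
  calc ∑ c ∈ Icc a b, (hCoef N (c + e) : ℤ) = ∑ c ∈ Icc a b, (F (c + 1) - F c) :=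
        sum_congr rfl fun c _ => by
          simp only [F, Nat.cast_succ, add_sub_cancel_right, hCoef_succ_left N (c + e)]
          push_cast
          ring_nf
    _ = _ := by rw [sum_Icc_sub hab]; simp [F]

/-- `ν / κ` is a horizontal strip. -/
def IsHorizontalStrip (κ ν : ℕ → ℕ) : Prop :=
  ∀ i, κ i ≤ ν i ∧ ν (i + 1) ≤ κ i

def stripsBelow (lam : Fin n → ℕ) : Finset (Fin n → ℕ) :=
  Fintype.piFinset fun i => Icc (extendPartition lam (i + 1)) (lam i)

lemma mem_stripsBelow {lam κ : Fin n → ℕ} :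
    κ ∈ stripsBelow lam ↔ IsHorizontalStrip (extendPartition κ) (extendPartition lam) := by
  simp only [stripsBelow, Fintype.mem_piFinset, mem_Icc, IsHorizontalStrip]
  refine ⟨fun h i => ?_, fun h i => ?_⟩
  · by_cases hi : i < n
    · simpa [extendPartition, hi, and_comm] using h ⟨i, hi⟩
    · simp [extendPartition_of_le _ (not_lt.mp hi),
        extendPartition_of_le _ (Nat.le_succ_of_le (not_lt.mp hi))]
  · simpa [extendPartition_coe, and_comm] using h i

lemma antitone_of_mem_stripsBelow {lam κ : Fin n → ℕ} (hκ : κ ∈ stripsBelow lam) :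
    Antitone κ :=
  antitone_extendPartition_iff.mp <| antitone_nat_of_succ_le fun i =>
    ((mem_stripsBelow.mp hκ (i + 1)).1).trans (mem_stripsBelow.mp hκ i).2

def jacobiTrudiMatrix (N : ℕ) (lam mu : Fin n → ℕ) : Matrix (Fin n) (Fin n) ℤ :=
  of fun i j => hCoef N ((lam i : ℤ) - i - mu j + j)

lemma strictAnti_sub_index {κ : Fin n → ℕ} (hκ : Antitone κ) :
    StrictAnti fun i : Fin n => (κ i : ℤ) - i := fun i j hij => by
  dsimp only
  have := hκ hij.le
  have : (i : ℕ) < j := hij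
  omega

lemma det_jacobiTrudiMatrix_zero {lam mu : Fin n → ℕ} (hlam : Antitone lam) (hmu : Antitone mu) :
    det (jacobiTrudiMatrix 0 lam mu) = if lam = mu then 1 else 0 := by
  have hiff : ((fun i : Fin n => (lam i : ℤ) - i) = fun i => (mu i : ℤ) - i) ↔ lam = mu :=
    ⟨fun h => funext fun i => by have := congrFun h i; omega, fun h => h ▸ rfl⟩
  have hdelta : jacobiTrudiMatrix 0 lam mu =
      of fun i j => if (lam i : ℤ) - i = (mu j : ℤ) - j then 1 else 0 := by
    ext i j
    simp only [jacobiTrudiMatrix, of_apply, hCoef_zero_left]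
    split_ifs <;> first | rfl | omega
  rw [hdelta, det_of_ite_eq_of_strictAnti (strictAnti_sub_index hlam) (strictAnti_sub_index hmu)]
  exact if_congr hiff rfl rfl

def stripRowSums (N : ℕ) (lam mu : Fin n → ℕ) : Matrix (Fin n) (Fin n) ℤ :=
  of fun k j => ∑ c ∈ Icc (extendPartition lam (k + 1)) (lam k), hCoef N ((c : ℤ) - k - mu j + j)

lemma stripRowSums_apply {lam : Fin n → ℕ} (hlam : Antitone lam) (N : ℕ) (mu : Fin n → ℕ)
    (k j : Fin n) :
    stripRowSums N lam mu k j =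
      hCoef (N + 1) ((extendPartition lam k : ℤ) - k - mu j + j) -
        hCoef (N + 1) ((extendPartition lam (k + 1) : ℤ) - (k + 1 : ℕ) - mu j + j) := by
  have hle : extendPartition lam (k + 1) ≤ lam k := by
    simpa [extendPartition_coe] using antitone_extendPartition_iff.mpr hlam (Nat.le_succ k)
  calc stripRowSums N lam mu k j
      = ∑ c ∈ Icc (extendPartition lam (k + 1)) (lam k), (hCoef N (c + (j - k - mu j)) : ℤ) :=
        by rw [stripRowSums, of_apply]; exact sum_congr rfl fun c _ => by ring_nf
    _ = _ := by
        rw [sum_Icc_hCoef N _ hle, extendPartition_coe]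
        congr 3 <;> push_cast <;> ring

lemma jacobiTrudiMatrix_succ_eq_sum {lam : Fin n → ℕ} (hlam : Antitone lam) (N : ℕ)
    (mu : Fin n → ℕ) :
    jacobiTrudiMatrix (N + 1) lam mu =
      of fun i j => ∑ k, if i ≤ k then stripRowSums N lam mu k j else 0 := by
  ext i j
  set Q : ℕ → ℤ := fun k => hCoef (N + 1) ((extendPartition lam k : ℤ) - k - mu j + j)
  have hQn : Q n = 0 := by
    have : (j : ℕ) < n := j.isLt
    simp [Q, extendPartition_of_le lam le_rfl,
      hCoef_of_neg _ (show -(n : ℤ) - mu j + j < 0 by omega)]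
  calc jacobiTrudiMatrix (N + 1) lam mu i j = Q i := by
        simp [Q, jacobiTrudiMatrix, extendPartition_coe]
    _ = ∑ k ∈ Ico (i : ℕ) n, -(Q (k + 1) - Q k) := by
        rw [sum_neg_distrib, sum_Ico_sub Q i.isLt.le, hQn, zero_sub, neg_neg]
    _ = ∑ k ∈ range n, if (i : ℕ) ≤ k then Q k - Q (k + 1) else 0 := by
        rw [← sum_filter]
        exact sum_congr (by ext; simp; omega) fun k _ => neg_sub _ _
    _ = ∑ k : Fin n, if i ≤ k then Q k - Q (k + 1) else 0 :=
        (Fin.sum_univ_eq_sum_range (fun k => if (i : ℕ) ≤ k then Q k - Q (k + 1) else 0) n).symm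
    _ = _ := by simp only [of_apply, stripRowSums_apply hlam, Q]

lemma det_jacobiTrudiMatrix_succ {lam : Fin n → ℕ} (hlam : Antitone lam) (N : ℕ)
    (mu : Fin n → ℕ) :
    det (jacobiTrudiMatrix (N + 1) lam mu) =
      ∑ κ ∈ stripsBelow lam, det (jacobiTrudiMatrix N κ mu) := by
  rw [jacobiTrudiMatrix_succ_eq_sum hlam, det_of_sum_ge_rows]
  exact det_of_sum_finset_rows _ _

def stripChains (N : ℕ) (lam mu : Fin n → ℕ) : Set (Fin (N + 1) → ℕ → ℕ) :=
  {ν | (∀ m, Antitone (ν m)) ∧ ν 0 = extendPartition mu ∧ ν (Fin.last N) = extendPartition lam ∧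
    ∀ m : Fin N, IsHorizontalStrip (ν m.castSucc) (ν m.succ)}

section stripChains

variable {N : ℕ} {lam mu : Fin n → ℕ} {ν : Fin (N + 1) → ℕ → ℕ}

lemma le_extendPartition_of_mem_stripChains (hν : ν ∈ stripChains N lam mu)
    (m : Fin (N + 1)) (i : ℕ) : ν m i ≤ extendPartition lam i := by
  have hmono : Monotone fun m => ν m i := Fin.monotone_iff_le_succ.mpr fun m => (hν.2.2.2 m i).1
  simpa [hν.2.2.1] using hmono (Fin.le_last m)

lemma eq_extendPartition_of_mem_stripChains (hν : ν ∈ stripChains N lam mu)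
    (m : Fin (N + 1)) : ν m = extendPartition fun i : Fin n => ν m i :=
  eq_extendPartition_of_le (le_extendPartition_of_mem_stripChains hν m)

lemma finite_stripChains : (stripChains N lam mu).Finite := by
  refine Set.finite_coe_iff.mp <| Finite.of_injective
    (β := Fin (N + 1) → (i : Fin n) → Fin (lam i + 1))
    (fun ν m i => ⟨ν.1 m i, Nat.lt_succ_of_le ?_⟩) fun ν ν' h => Subtype.ext (funext fun m => ?_)
  · simpa [extendPartition_coe] using le_extendPartition_of_mem_stripChains ν.2 m i
  · rw [eq_extendPartition_of_mem_stripChains ν.2 m,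
      eq_extendPartition_of_mem_stripChains ν'.2 m]
    exact congrArg extendPartition (funext fun i => congrArg Fin.val (congrFun (congrFun h m) i))

lemma penultimate_mem_stripsBelow {ν : Fin (N + 2) → ℕ → ℕ}
    (hν : ν ∈ stripChains (N + 1) lam mu) :
    (fun i : Fin n => ν (Fin.last N).castSucc i) ∈ stripsBelow lam := by
  rw [mem_stripsBelow, ← eq_extendPartition_of_mem_stripChains hν, ← hν.2.2.1, ← Fin.succ_last]
  exact hν.2.2.2 (Fin.last N)

lemma init_mem_stripChains {ν : Fin (N + 2) → ℕ → ℕ} (hν : ν ∈ stripChains (N + 1) lam mu) :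
    Fin.init ν ∈ stripChains N (fun i : Fin n => ν (Fin.last N).castSucc i) mu :=
  ⟨fun _ => hν.1 _, hν.2.1, eq_extendPartition_of_mem_stripChains hν _,
    fun m => hν.2.2.2 m.castSucc⟩

lemma snoc_mem_stripChains {κ : Fin n → ℕ} (hν : ν ∈ stripChains N κ mu)
    (hκ : κ ∈ stripsBelow lam) (hlam : Antitone lam) :
    Fin.snoc (α := fun _ => ℕ → ℕ) ν (extendPartition lam) ∈ stripChains (N + 1) lam mu :=
  ⟨Fin.lastCases (by simpa using antitone_extendPartition_iff.mpr hlam)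
      (fun m => by simpa using hν.1 m),
    by
      change Fin.snoc (α := fun _ => ℕ → ℕ) ν _ (Fin.castSucc 0) = _
      simpa only [Fin.snoc_castSucc] using hν.2.1,
    Fin.snoc_last _ _,
    Fin.lastCases (by simpa [hν.2.2.1] using mem_stripsBelow.mp hκ)
      fun m => by
        change IsHorizontalStrip (Fin.snoc (α := fun _ => ℕ → ℕ) ν _ m.castSucc.castSucc)
          (Fin.snoc (α := fun _ => ℕ → ℕ) ν _ m.succ.castSucc)
        simpa only [Fin.snoc_castSucc] using hν.2.2.2 m⟩

lemma card_stripChains_zero (hmu : Antitone mu) :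
    Nat.card (stripChains 0 lam mu) = if lam = mu then 1 else 0 := by
  have : Subsingleton (stripChains 0 lam mu) :=
    ⟨fun ν ν' => Subtype.ext (funext fun m => by rw [Fin.fin_one_eq_zero m, ν.2.2.1, ν'.2.2.1])⟩
  split_ifs with h
  · subst h
    have : Nonempty (stripChains 0 lam lam) :=
      ⟨⟨fun _ => extendPartition lam, fun _ => antitone_extendPartition_iff.mpr hmu, rfl, rfl,
        Fin.elim0⟩⟩
    exact Nat.card_eq_one_iff_unique.mpr ⟨inferInstance, inferInstance⟩
  · have : IsEmpty (stripChains 0 lam mu) :=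
      ⟨fun ν => h (extendPartition_injective (ν.2.2.2.1.symm.trans ν.2.2.1))⟩
    exact Nat.card_of_isEmpty

def penultimate (ν : stripChains (N + 1) lam mu) : stripsBelow lam :=
  ⟨_, penultimate_mem_stripsBelow ν.2⟩

def penultimateFiberEquiv (hlam : Antitone lam) (κ : stripsBelow lam) :
    {ν : stripChains (N + 1) lam mu // penultimate ν = κ} ≃ stripChains N κ.1 mu where
  toFun ν := ⟨Fin.init ν.1.1, by
    obtain ⟨⟨ν, hν⟩, rfl⟩ := ν
    exact init_mem_stripChains hν⟩
  invFun ν := ⟨⟨_, snoc_mem_stripChains ν.2 κ.2 hlam⟩, Subtype.ext <| funext fun i => by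
    simp [penultimate, ν.2.2.2.1, extendPartition_coe]⟩
  left_inv := by
    rintro ⟨⟨ν, hν⟩, -⟩
    refine Subtype.ext (Subtype.ext ?_)
    change Fin.snoc (Fin.init ν) (extendPartition lam) = ν
    rw [← hν.2.2.1]
    exact Fin.snoc_init_self _
  right_inv ν := Subtype.ext <|
    show Fin.init (Fin.snoc (α := fun _ => ℕ → ℕ) ν.1 (extendPartition lam)) = ν.1 from
      Fin.init_snoc _ _

lemma card_stripChains_succ (hlam : Antitone lam) :
    Nat.card (stripChains (N + 1) lam mu) =
      ∑ κ ∈ stripsBelow lam, Nat.card (stripChains N κ mu) := by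
  have := (finite_stripChains (N := N + 1) (lam := lam) (mu := mu)).to_subtype
  rw [← Nat.card_congr (Equiv.sigmaFiberEquiv penultimate), Nat.card_sigma,
    ← sum_coe_sort (stripsBelow lam)]
  exact sum_congr rfl fun κ _ => Nat.card_congr (penultimateFiberEquiv hlam κ)

end stripChains

end SkewJacobiTrudi

open SkewJacobiTrudi in
theorem skew_jacobi_trudi_principal_general (n : ℕ) (N : ℕ)
    (lam mu : Fin n → ℕ) (hlam : Antitone lam) (hmu : Antitone mu) :
    (Nat.card {ν : Fin (N + 1) → ℕ → ℕ //
        (∀ m, Antitone (ν m)) ∧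
        ν 0 = extendPartition mu ∧
        ν (Fin.last N) = extendPartition lam ∧
        ∀ (m : Fin N) (i : ℕ),
          ν m.castSucc i ≤ ν m.succ i ∧ ν m.succ (i + 1) ≤ ν m.castSucc i} : ℤ)
      = Matrix.det (Matrix.of fun i j : Fin n =>
          (hCoef N ((lam i : ℤ) - (i : ℤ) - (mu j : ℤ) + (j : ℤ)) : ℤ)) := by
  change (Nat.card (stripChains N lam mu) : ℤ) = (jacobiTrudiMatrix N lam mu).det
  induction N generalizing lam with
  | zero =>
    rw [card_stripChains_zero hmu, det_jacobiTrudiMatrix_zero hlam hmu]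
    split_ifs <;> rfl
  | succ N ih =>
    rw [card_stripChains_succ hlam, det_jacobiTrudiMatrix_succ hlam, Nat.cast_sum]
    exact sum_congr rfl fun κ hκ => ih κ (antitone_of_mem_stripsBelow hκ)

/-- **Enumeration of chains of partitions by horizontal strips** (skew Jacobi–Trudi
identity at the principal specialization): for partitions `λ, μ` with at most `n` parts,
the number of sequences `μ = ν⁽⁰⁾ ⊆ ν⁽¹⁾ ⊆ ⋯ ⊆ ν⁽ᴺ⁾ = λ` of partitions in which each
consecutive skew diagram is a horizontal strip equals
`det ( h_{λ_i - i - μ_j + j} )_{1 ≤ i,j ≤ n}`. -/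
theorem skew_jacobi_trudi_principal (n : ℕ) (hn : 1 ≤ n) (N : ℕ)
    (lam mu : Fin n → ℕ) (hlam : Antitone lam) (hmu : Antitone mu) :
    (Nat.card {ν : Fin (N + 1) → ℕ → ℕ //
        (∀ m, Antitone (ν m)) ∧
        ν 0 = extendPartition mu ∧
        ν (Fin.last N) = extendPartition lam ∧
        ∀ (m : Fin N) (i : ℕ),
          ν m.castSucc i ≤ ν m.succ i ∧ ν m.succ (i + 1) ≤ ν m.castSucc i} : ℤ)
      = Matrix.det (Matrix.of fun i j : Fin n =>
          (hCoef N ((lam i : ℤ) - (i : ℤ) - (mu j : ℤ) + (j : ℤ)) : ℤ)) :=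
  skew_jacobi_trudi_principal_general n N lam mu hlam hmu
end

section
/- For every integer k ≥ 0, every real η, and every c > 0, the vertical-line integral (1/(2πi)) ∫_{L_{0+}} e^{v² + 2ηv} v^{−k−1} dv (along the upward vertical line Re v = c) equals (2^k/√π) ∫_0^∞ (ξ^k / k!) e^{−(ξ−η)²} dξ; in particular, the left-hand side is independent of c > 0. -/
open MeasureTheory

/-- The integral `∫_{L_{0+}} f(v) dv = ∫_ℝ f(c + it)·i dt` along the upward vertical line
`Re v = c`. -/
noncomputable def lineInt (c : ℝ) (f : ℂ → ℂ) : ℂ :=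
  ∫ t : ℝ, f (c + t * Complex.I) * Complex.I

/-!
For `Re v > 0` one has `v^(-k-1) = (1/k!) ∫₀^∞ x^k e^{-vx} dx`. Inserting this into the line
integral gives an absolutely convergent double integral (its integrand has modulus
`e^{-t²} e^{c² + 2ηc} x^k e^{-cx}`), so the order of integration may be exchanged. For fixed `x`
the integral over `t` is a Gaussian integral along a vertical line,
`∫ e^{(c+it)² + (2η-x)(c+it)} dt = √π e^{-(x/2-η)²}`, independent of `c`; the substitution
`x = 2ξ` then yields the right-hand side.
-/

open Set Filter Real
open scoped Complex Nat
open Complex (I)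

lemma norm_ofReal_pow_mul_cexp_neg_mul (n : ℕ) (v : ℂ) {x : ℝ} (hx : 0 ≤ x) :
    ‖(x : ℂ) ^ n * cexp (-(v * x))‖ = x ^ n * rexp (-v.re * x) := by
  simp [Complex.norm_exp, abs_of_nonneg hx]

section Laplace

variable {v : ℂ}

lemma integrableOn_ofReal_pow_mul_cexp_neg_mul (n : ℕ) (hv : 0 < v.re) :
    IntegrableOn (fun x : ℝ => (x : ℂ) ^ n * cexp (-(v * x))) (Ioi 0) := by
  have hreal : IntegrableOn (fun x : ℝ => x ^ n * rexp (-v.re * x)) (Ioi 0) := by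
    simpa using integrableOn_rpow_mul_exp_neg_mul_rpow (s := n)
      (by linarith [n.cast_nonneg (α := ℝ)]) one_pos hv
  refine hreal.mono' (by fun_prop) ?_
  filter_upwards [ae_restrict_mem measurableSet_Ioi] with x hx
  exact (norm_ofReal_pow_mul_cexp_neg_mul n v hx.le).le

lemma tendsto_ofReal_pow_mul_cexp_neg_mul (n : ℕ) (hv : 0 < v.re) :
    Tendsto (fun x : ℝ => (x : ℂ) ^ n * cexp (-(v * x))) atTop (nhds 0) := by
  rw [tendsto_zero_iff_norm_tendsto_zero]
  have h : Tendsto (fun x : ℝ => x ^ n * rexp (-v.re * x)) atTop (nhds 0) := by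
    simpa using tendsto_rpow_mul_exp_neg_mul_atTop_nhds_zero n v.re hv
  refine h.congr' ?_
  filter_upwards [eventually_ge_atTop 0] with x hx
  exact (norm_ofReal_pow_mul_cexp_neg_mul n v hx).symm

lemma integral_ofReal_pow_succ_mul_cexp_neg_mul (n : ℕ) (hv : 0 < v.re) :
    v * ∫ x in Ioi (0 : ℝ), (x : ℂ) ^ (n + 1) * cexp (-(v * x))
      = (n + 1) * ∫ x in Ioi (0 : ℝ), (x : ℂ) ^ n * cexp (-(v * x)) := by
  have hderiv : ∀ x ∈ Ici (0 : ℝ),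
      HasDerivAt (fun x : ℝ => (x : ℂ) ^ (n + 1) * cexp (-(v * x)))
        ((n + 1) * ((x : ℂ) ^ n * cexp (-(v * x)))
          - v * ((x : ℂ) ^ (n + 1) * cexp (-(v * x)))) x := by
    intro x _
    have hpow := (hasDerivAt_pow (n + 1) (x : ℂ)).comp_ofReal
    have hlin : HasDerivAt (fun x : ℝ => -(v * x)) (-v) x :=
      ((hasDerivAt_id (x : ℂ)).comp_ofReal.const_mul v).neg.congr_deriv (by simp)
    refine (hpow.mul hlin.cexp).congr_deriv ?_
    rw [Nat.add_sub_cancel]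
    push_cast
    ring
  have hint := ((integrableOn_ofReal_pow_mul_cexp_neg_mul n hv).const_mul ((n : ℂ) + 1)).sub
    ((integrableOn_ofReal_pow_mul_cexp_neg_mul (n + 1) hv).const_mul v)
  have h := integral_Ioi_of_hasDerivAt_of_tendsto' hderiv hint
    (tendsto_ofReal_pow_mul_cexp_neg_mul (n + 1) hv)
  rw [integral_sub ((integrableOn_ofReal_pow_mul_cexp_neg_mul n hv).const_mul _)
    ((integrableOn_ofReal_pow_mul_cexp_neg_mul (n + 1) hv).const_mul v), integral_const_mul,
    integral_const_mul] at h
  simp only [Complex.ofReal_zero, zero_pow n.succ_ne_zero, zero_mul, sub_zero] at h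
  linear_combination -h

theorem integral_ofReal_pow_mul_cexp_neg_mul (k : ℕ) (hv : 0 < v.re) :
    ∫ x in Ioi (0 : ℝ), (x : ℂ) ^ k * cexp (-(v * x)) = k ! / v ^ (k + 1) := by
  have hv0 : v ≠ 0 := by rintro rfl; simp at hv
  induction k with
  | zero =>
    simpa [neg_mul, ← mul_neg, neg_div, div_neg] using
      integral_exp_mul_complex_Ioi (a := -v) (by simpa using hv) 0
  | succ n ih =>
    have h := integral_ofReal_pow_succ_mul_cexp_neg_mul n hv
    rw [ih] at h
    rw [mul_div_assoc', eq_div_iff (pow_ne_zero _ hv0)] at h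
    rw [eq_div_iff (pow_ne_zero _ hv0), Nat.factorial_succ]
    push_cast
    linear_combination h

lemma cexp_mul_zpow_neg_sub_one_eq_integral (k : ℕ) (a : ℂ) (hv : 0 < v.re) :
    cexp (v ^ 2 + a * v) * v ^ (-(k : ℤ) - 1)
      = (k ! : ℂ)⁻¹ * ∫ x in Ioi (0 : ℝ), (x : ℂ) ^ k * cexp (v ^ 2 + (a - x) * v) := by
  have hv0 : v ≠ 0 := by rintro rfl; simp at hv
  have hk : (k ! : ℂ) ≠ 0 := Nat.cast_ne_zero.mpr k.factorial_ne_zero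
  have hsplit (x : ℝ) : (x : ℂ) ^ k * cexp (v ^ 2 + (a - x) * v)
      = cexp (v ^ 2 + a * v) * ((x : ℂ) ^ k * cexp (-(v * x))) := by
    rw [mul_left_comm, ← Complex.exp_add]
    ring_nf
  have hzpow : v ^ (-(k : ℤ) - 1) = (v ^ (k + 1))⁻¹ := by
    rw [← zpow_natCast, ← zpow_neg]
    push_cast
    ring_nf
  simp_rw [hsplit, integral_const_mul, integral_ofReal_pow_mul_cexp_neg_mul k hv, hzpow]
  field_simp

end Laplace

lemma integral_cexp_sq_add_mul_vertical (w b : ℂ) :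
    ∫ t : ℝ, cexp ((w + t * I) ^ 2 + b * (w + t * I)) = √π * cexp (-(b ^ 2 / 4)) := by
  have hquad (t : ℝ) : (w + t * I) ^ 2 + b * (w + t * I)
      = -1 * (t : ℂ) ^ 2 + I * (2 * w + b) * t + (w ^ 2 + b * w) := by
    linear_combination (t : ℂ) ^ 2 * Complex.I_sq
  simp_rw [hquad]
  have hsqrt : ((√π : ℝ) : ℂ) = (π : ℂ) ^ (1 / 2 : ℂ) := by
    rw [Real.sqrt_eq_rpow, Complex.ofReal_cpow pi_pos.le]
    norm_num
  rw [integral_cexp_quadratic (by simp), neg_neg, div_one, hsqrt]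
  congr 2
  linear_combination (2 * w + b) ^ 2 / 4 * Complex.I_sq

/-- The integrand obtained by inserting `v ^ (-k-1) = (1/k!) ∫₀^∞ x^k e^{-vx} dx` into
`e^{v² + a v} v^(-k-1)` at `v = c + t I`. -/
noncomputable def laplaceLineKernel (k : ℕ) (c a t x : ℝ) : ℂ :=
  (x : ℂ) ^ k * cexp ((c + t * I) ^ 2 + (a - x) * (c + t * I))

section LaplaceLineKernel
variable (k : ℕ) (a : ℝ) {c : ℝ}

lemma norm_laplaceLineKernel (t x : ℝ) :
    ‖laplaceLineKernel k c a t x‖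
      = rexp (-t ^ 2) * (rexp (c ^ 2 + a * c) * ‖(x : ℂ) ^ k * cexp (-(c * x))‖) := by
  simp only [laplaceLineKernel, norm_mul, Complex.norm_exp]
  have hre : ((c + t * I) ^ 2 + (a - x) * (c + t * I)).re
      = -t ^ 2 + (c ^ 2 + a * c) + (-(c * x : ℂ)).re := by
    simp only [sq, Complex.add_re, Complex.add_im, Complex.mul_re, Complex.mul_im, Complex.sub_re,
      Complex.sub_im, Complex.neg_re, Complex.ofReal_re, Complex.ofReal_im, Complex.I_re,
      Complex.I_im]
    ring
  rw [hre, Real.exp_add, Real.exp_add]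
  ring

lemma integrable_laplaceLineKernel (hc : 0 < c) :
    Integrable (Function.uncurry (laplaceLineKernel k c a))
      ((volume : Measure ℝ).prod (volume.restrict (Ioi 0))) := by
  have hbound := (integrable_exp_neg_mul_sq one_pos).mul_prod
    ((integrableOn_ofReal_pow_mul_cexp_neg_mul k (v := c) (by simpa using hc)).norm.const_mul
      (rexp (c ^ 2 + a * c)))
  refine hbound.mono' (by unfold laplaceLineKernel; fun_prop) (Eventually.of_forall fun p => ?_)
  simp [Function.uncurry, norm_laplaceLineKernel]

lemma integral_laplaceLineKernel (x : ℝ) :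
    ∫ t, laplaceLineKernel k c a t x = √π * (x : ℂ) ^ k * cexp (-((a - x) ^ 2 / 4)) := by
  simp only [laplaceLineKernel]
  rw [integral_const_mul, integral_cexp_sq_add_mul_vertical]
  ring

end LaplaceLineKernel

lemma integral_Ioi_pow_mul_exp_neg_sq_half (k : ℕ) (η : ℝ) :
    ∫ x in Ioi (0 : ℝ), x ^ k * rexp (-((2 * η - x) ^ 2 / 4))
      = 2 ^ (k + 1) * ∫ ξ in Ioi (0 : ℝ), ξ ^ k * rexp (-(ξ - η) ^ 2) := by
  have h := integral_comp_mul_left_Ioi' (fun x => x ^ k * rexp (-((2 * η - x) ^ 2 / 4))) 0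
    two_pos
  rw [mul_zero] at h
  rw [← h, smul_eq_mul, pow_succ, mul_comm _ 2, mul_assoc, ← integral_const_mul (2 ^ k : ℝ)]
  congr 2 with ξ
  rw [mul_pow, show (2 * η - 2 * ξ) ^ 2 / 4 = (ξ - η) ^ 2 by ring]
  ring

/-- For every integer `k ≥ 0`, every real `η` and every `c > 0`, the vertical-line
integral `(1/(2πi)) ∫_{L_{0+}} e^{v² + 2ηv} v^{-k-1} dv` equals
`(2^k/√π) ∫_0^∞ (ξ^k/k!) e^{-(ξ-η)²} dξ`; in particular it is independent of `c > 0`. -/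
theorem phi_integral_nonneg_index (k : ℕ) (η : ℝ) (c : ℝ) (hc : 0 < c) :
    (1 / (2 * Real.pi * Complex.I)) *
        lineInt c (fun v => Complex.exp (v ^ 2 + 2 * η * v) * v ^ (-(k : ℤ) - 1))
      = (((2 : ℝ) ^ k / Real.sqrt Real.pi) *
          ∫ ξ in Set.Ioi (0 : ℝ), ξ ^ k / (Nat.factorial k : ℝ) * Real.exp (-(ξ - η) ^ 2) : ℝ) := by
  have hline : lineInt c (fun v => cexp (v ^ 2 + 2 * η * v) * v ^ (-(k : ℤ) - 1))
      = I / k ! * ∫ x in Ioi 0, ∫ t, laplaceLineKernel k c (2 * η) t x := by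
    rw [← integral_integral_swap (integrable_laplaceLineKernel k (2 * η) hc),
      ← integral_const_mul]
    refine integral_congr_ae (Eventually.of_forall fun t => ?_)
    have hv : 0 < ((c : ℂ) + t * I).re := by simpa using hc
    have h := cexp_mul_zpow_neg_sub_one_eq_integral k (2 * η) hv
    simp only [laplaceLineKernel]
    push_cast
    rw [h]
    ring
  have hinner (x : ℝ) : ∫ t, laplaceLineKernel k c (2 * η) t x
      = ↑(√π * (x ^ k * rexp (-((2 * η - x) ^ 2 / 4)))) := by
    rw [integral_laplaceLineKernel]
    push_cast
    ring
  simp_rw [hinner] at hline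
  rw [hline, integral_complex_ofReal, integral_const_mul, integral_Ioi_pow_mul_exp_neg_sq_half]
  simp_rw [div_mul_eq_mul_div, integral_div]
  have hpi : ((√π : ℝ) : ℂ) ^ 2 = π := by exact_mod_cast Real.sq_sqrt pi_pos.le
  push_cast
  field_simp
  rw [hpi]
  ring
end

section
/- For every integer k ≤ −1, every real η, and every c > 0, the vertical-line integral (1/(2πi)) ∫_{L_{0+}} e^{v² + 2ηv} v^{−k−1} dv (along the upward vertical line Re v = c) equals (2^k/√π) · e^{−η²} · H_{−k−1}(−η), where H_j denotes the physicists' Hermite polynomial; in particular, the left-hand side is independent of c > 0. -/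
open MeasureTheory

/-- The physicists' Hermite polynomial `H_j(x) = (-1)^j e^{x²} (d/dx)^j e^{-x²}`. -/
noncomputable def physHermite (j : ℕ) (x : ℝ) : ℝ :=
  (-1) ^ j * Real.exp (x ^ 2) * iteratedDeriv j (fun t => Real.exp (-(t ^ 2))) x

/-!
Write `F_n(η) = ∫ e^{v² + 2ηv} v^n dt` over `v = c + it`. For `n = 0` this is a complex Gaussian
integral, `F_0(η) = √π e^{-η²}`, whatever `c` is. Differentiating under the integral sign gives
`F_n' = 2 F_{n+1}`, so `F_n = 2^{-n} F_0^{(n)}`, and the parity of `e^{-x²}` turns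
`F_0^{(n)}(η)` into `√π e^{-η²} H_n(-η)`.
-/

noncomputable section

open Complex

def gaussWeight (η : ℝ) (n : ℕ) (v : ℂ) : ℂ :=
  cexp (v ^ 2 + 2 * η * v) * v ^ n

lemma integrable_pow_mul_exp_neg_sq (j : ℕ) :
    Integrable fun t : ℝ => t ^ j * Real.exp (-t ^ 2) := by
  simpa [Real.rpow_natCast] using
    integrable_rpow_mul_exp_neg_mul_sq one_pos (s := j) (neg_one_lt_zero.trans_le j.cast_nonneg)

lemma integrable_add_abs_pow_mul_exp_neg_sq (a : ℝ) (n : ℕ) :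
    Integrable fun t : ℝ => (a + |t|) ^ n * Real.exp (-t ^ 2) := by
  have h := integrable_finsetSum (Finset.range (n + 1)) fun k _ =>
    (integrable_pow_mul_exp_neg_sq (n - k)).norm.const_mul (a ^ k * n.choose k)
  refine h.congr (.of_forall fun t => ?_)
  simp only [norm_mul, norm_pow, Real.norm_eq_abs, Real.abs_exp]
  rw [add_pow, Finset.sum_mul]
  exact Finset.sum_congr rfl fun k _ => by ring

lemma norm_gaussWeight_le (η c t : ℝ) (n : ℕ) :
    ‖gaussWeight η n (c + t * I)‖
      ≤ Real.exp (c ^ 2 + 2 * η * c) * ((|c| + |t|) ^ n * Real.exp (-t ^ 2)) := by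
  have hre : ((c + t * I : ℂ) ^ 2 + 2 * η * (c + t * I)).re = c ^ 2 + 2 * η * c + -t ^ 2 := by
    simp [pow_two]
    ring
  have hnorm : ‖(c + t * I : ℂ)‖ ≤ |c| + |t| := by
    simpa using norm_le_abs_re_add_abs_im (c + t * I : ℂ)
  rw [gaussWeight, norm_mul, norm_pow, norm_exp, hre, Real.exp_add]
  have := pow_le_pow_left₀ (norm_nonneg _) hnorm n
  calc _ ≤ Real.exp (c ^ 2 + 2 * η * c) * Real.exp (-t ^ 2) * (|c| + |t|) ^ n := by gcongr
    _ = _ := by ring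

lemma integrable_gaussWeight_vertical (η c : ℝ) (n : ℕ) :
    Integrable fun t : ℝ => gaussWeight η n (c + t * I) :=
  ((integrable_add_abs_pow_mul_exp_neg_sq |c| n).const_mul _).mono'
    (by unfold gaussWeight; fun_prop) (.of_forall fun t => norm_gaussWeight_le η c t n)

lemma hasDerivAt_gaussWeight_param (n : ℕ) (v : ℂ) (η : ℝ) :
    HasDerivAt (fun x : ℝ => gaussWeight x n v) (2 * gaussWeight η (n + 1) v) η := by
  have hexp : HasDerivAt (fun x : ℝ => v ^ 2 + 2 * (x : ℂ) * v) (2 * v) η := by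
    simpa using (((hasDerivAt_id η).ofReal_comp.const_mul (2 : ℂ)).mul_const v).const_add (v ^ 2)
  refine (hexp.cexp.mul_const (v ^ n)).congr_deriv ?_
  rw [gaussWeight]
  ring

lemma hasDerivAt_integral_gaussWeight_vertical (c : ℝ) (n : ℕ) (η : ℝ) :
    HasDerivAt (fun x : ℝ => ∫ t : ℝ, gaussWeight x n (c + t * I))
      (2 * ∫ t : ℝ, gaussWeight η (n + 1) (c + t * I)) η := by
  have hbound : ∀ t : ℝ, ∀ x ∈ Metric.ball η 1, ‖2 * gaussWeight x (n + 1) (c + t * I)‖ ≤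
      2 * (Real.exp (c ^ 2 + 2 * (|η| + 1) * |c|) * ((|c| + |t|) ^ (n + 1) * Real.exp (-t ^ 2))) := by
    intro t x hx
    have hx : |x| ≤ |η| + 1 := by
      have hd : |x - η| < 1 := Metric.mem_ball.1 hx
      linarith [abs_sub_abs_le_abs_sub x η]
    have hxc : 2 * x * c ≤ 2 * (|η| + 1) * |c| := calc
      2 * x * c ≤ 2 * (|x| * |c|) := by linarith [(le_abs_self (x * c)).trans (abs_mul x c).le]
      _ ≤ 2 * (|η| + 1) * |c| := by rw [← mul_assoc]; gcongr
    rw [norm_mul, Complex.norm_two]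
    grw [norm_gaussWeight_le, hxc]
  rw [← integral_const_mul]
  refine (hasDerivAt_integral_of_dominated_loc_of_deriv_le (Metric.ball_mem_nhds η one_pos)
    (.of_forall fun x => (integrable_gaussWeight_vertical x c n).aestronglyMeasurable)
    (integrable_gaussWeight_vertical η c n)
    ((integrable_gaussWeight_vertical η c (n + 1)).const_mul 2).aestronglyMeasurable
    (.of_forall hbound)
    (((integrable_add_abs_pow_mul_exp_neg_sq |c| (n + 1)).const_mul _).const_mul 2)
    (.of_forall fun t x _ => hasDerivAt_gaussWeight_param n _ x)).2

lemma integral_gaussWeight_zero_vertical (η c : ℝ) :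
    ∫ t : ℝ, gaussWeight η 0 (c + t * I) = ((√Real.pi * Real.exp (-(η ^ 2)) : ℝ) : ℂ) := by
  -- completing the square: `v² + 2ηv = -(t - i(c + η))² - η²` for `v = c + it`
  have hsq : ∀ t : ℝ, gaussWeight η 0 (c + t * I)
      = cexp (-1 * (t + (-(c + η) : ℝ) * I) ^ 2) * cexp (-η ^ 2) := fun t => by
    rw [gaussWeight, pow_zero, mul_one, ← Complex.exp_add]
    congr 1
    push_cast
    linear_combination ((t : ℂ) ^ 2 + (c + η) ^ 2) * I_sq
  simp_rw [hsq]
  rw [integral_mul_const, GaussianFourier.integral_cexp_neg_mul_sq_add_real_mul_I (by simp)]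
  rw [Real.sqrt_eq_rpow, ofReal_mul, ofReal_cpow Real.pi_nonneg, ofReal_exp]
  norm_num

lemma integral_gaussWeight_vertical (c : ℝ) (n : ℕ) (η : ℝ) :
    ∫ t : ℝ, gaussWeight η n (c + t * I)
      = ((√Real.pi / 2 ^ n * iteratedDeriv n (fun t => Real.exp (-(t ^ 2))) η : ℝ) : ℂ) := by
  induction n generalizing η with
  | zero => simpa using integral_gaussWeight_zero_vertical η c
  | succ n ih =>
    have hdiff : HasDerivAt (iteratedDeriv n fun t => Real.exp (-(t ^ 2)))
        (iteratedDeriv (n + 1) (fun t => Real.exp (-(t ^ 2))) η) η := by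
      rw [iteratedDeriv_succ]
      exact (ContDiff.differentiable_iteratedDeriv n (by fun_prop : ContDiff ℝ ⊤ _)
        (WithTop.coe_lt_top _) η).hasDerivAt
    have hderiv := (hasDerivAt_integral_gaussWeight_vertical c n η).unique
      (funext ih ▸ (hdiff.const_mul (√Real.pi / 2 ^ n)).ofReal_comp)
    push_cast at hderiv ⊢
    linear_combination hderiv / 2

lemma iteratedDeriv_exp_neg_sq_neg (n : ℕ) (x : ℝ) :
    iteratedDeriv n (fun t => Real.exp (-(t ^ 2))) (-x)
      = (-1) ^ n * iteratedDeriv n (fun t => Real.exp (-(t ^ 2))) x := by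
  have h := iteratedDeriv_comp_neg n (fun t => Real.exp (-(t ^ 2))) (-x)
  simp only [neg_sq, neg_neg, smul_eq_mul] at h
  exact h

lemma physHermite_neg (n : ℕ) (x : ℝ) :
    physHermite n (-x) = Real.exp (x ^ 2) * iteratedDeriv n (fun t => Real.exp (-(t ^ 2))) x := by
  have hsign : ((-1 : ℝ) ^ n) ^ 2 = 1 := by rw [← pow_mul, pow_mul', neg_one_sq, one_pow]
  rw [physHermite, iteratedDeriv_exp_neg_sq_neg, neg_sq]
  linear_combination (Real.exp (x ^ 2) * iteratedDeriv n (fun t => Real.exp (-(t ^ 2))) x) * hsign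

end

theorem phi_integral_negative_index_general (k : ℤ) (hk : k ≤ -1) (η : ℝ) (c : ℝ) :
    (1 / (2 * Real.pi * Complex.I)) *
        lineInt c (fun v => Complex.exp (v ^ 2 + 2 * η * v) * v ^ (-k - 1))
      = (((2 : ℝ) ^ k / Real.sqrt Real.pi) * Real.exp (-η ^ 2) *
          physHermite (-k - 1).toNat (-η) : ℝ) := by
  obtain ⟨n, hn⟩ : ∃ n : ℕ, -k - 1 = n := ⟨(-k - 1).toNat, by omega⟩
  have hline : lineInt c (fun v => Complex.exp (v ^ 2 + 2 * η * v) * v ^ (-k - 1))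
      = (∫ t : ℝ, gaussWeight η n (c + t * Complex.I)) * Complex.I := by
    simp only [lineInt, hn, zpow_natCast]
    exact integral_mul_const _ _
  have h2k : (2 : ℝ) ^ k = (2 ^ (n + 1))⁻¹ := by
    rw [show k = -((n + 1 : ℕ) : ℤ) by omega, zpow_neg, zpow_natCast]
  have hexp : Complex.exp (-η ^ 2) * Complex.exp (η ^ 2) = 1 := by
    rw [← Complex.exp_add, neg_add_cancel, Complex.exp_zero]
  have hpi : ((√Real.pi : ℝ) : ℂ) ^ 2 = Real.pi := by
    rw [← Complex.ofReal_pow, Real.sq_sqrt Real.pi_nonneg]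
  rw [hline, integral_gaussWeight_vertical, hn, Int.toNat_natCast, physHermite_neg, h2k]
  push_cast
  field_simp
  linear_combination (iteratedDeriv n (fun t => Real.exp (-(t ^ 2))) η * 2 ^ (n + 1) : ℂ) * hpi
    - (2 * Real.pi * 2 ^ n * iteratedDeriv n (fun t => Real.exp (-(t ^ 2))) η : ℂ) * hexp

/-- For every integer `k ≤ -1`, every real `η` and every `c > 0`, the vertical-line
integral `(1/(2πi)) ∫_{L_{0+}} e^{v² + 2ηv} v^{-k-1} dv` equals
`(2^k/√π) e^{-η²} H_{-k-1}(-η)`; in particular it is independent of `c > 0`. -/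
theorem phi_integral_negative_index (k : ℤ) (hk : k ≤ -1) (η : ℝ) (c : ℝ) (hc : 0 < c) :
    (1 / (2 * Real.pi * Complex.I)) *
        lineInt c (fun v => Complex.exp (v ^ 2 + 2 * η * v) * v ^ (-k - 1))
      = (((2 : ℝ) ^ k / Real.sqrt Real.pi) * Real.exp (-η ^ 2) *
          physHermite (-k - 1).toNat (-η) : ℝ) :=
  phi_integral_negative_index_general k hk η c
end

section
/- Mehta's Gaussian integral (normalization constant of the GUE eigenvalue density): for every integer n ≥ 1, ∫_{ℝ^n} Δ_n(x)² ∏_{j=1}^n e^{−x_j²/2} dx = (2π)^{n/2} · ∏_{k=1}^n k!. -/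
open MeasureTheory

/-- The Vandermonde product `Δ_n(x) = ∏_{1 ≤ i < j ≤ n} (x_j - x_i)`. -/
noncomputable def vanProd (n : ℕ) (x : Fin n → ℝ) : ℝ :=
  ∏ p ∈ Finset.univ.filter (fun p : Fin n × Fin n => p.1 < p.2), (x p.2 - x p.1)

/-!
Row operations turn the Vandermonde matrix into `(He_i(x_j))`, with `He_i` the monic
(probabilists') Hermite polynomials. Expanding the squared determinant as a double sum over
permutations (Andréief), each term integrates coordinatewise, and the orthogonality
`∫ He_i He_j e^{-t²/2} dt = δ_ij i! √(2π)` kills every pair `σ ≠ τ`, leaving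
`n! ∏_{i<n} i! (2π)^{n/2}`. Orthogonality comes from integrating by parts `k` times with
`(He_k e^{-t²/2})' = -He_{k+1} e^{-t²/2}`, so that `∫ P He_k e^{-t²/2} = ∫ P⁽ᵏ⁾ e^{-t²/2}`.
-/

open Finset Equiv Nat Polynomial Real

section Andreief

variable {α ι : Type*} [Fintype ι] [DecidableEq ι]

theorem det_sq_mul_prod_eq_sum (f : ι → α → ℝ) (g : α → ℝ) (x : ι → α) :
    (Matrix.of fun i j => f i (x j)).det ^ 2 * ∏ j, g (x j) =
      ∑ σ : Perm ι, ∑ τ : Perm ι, ((Perm.sign σ * Perm.sign τ : ℤ) : ℝ) *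
        ∏ j, f (σ j) (x j) * f (τ j) (x j) * g (x j) := by
  simp only [Matrix.det_apply', Matrix.of_apply]
  rw [sq, sum_mul_sum, sum_mul]
  refine sum_congr rfl fun σ _ => ?_
  rw [sum_mul]
  refine sum_congr rfl fun τ _ => ?_
  simp only [prod_mul_distrib]
  push_cast
  ring

theorem prod_integral_eq_ite_of_orthogonal [MeasurableSpace α] (μ : Measure α)
    (F : ι → ι → α → ℝ) (c : ι → ℝ)
    (horth : ∀ i j, ∫ t, F i j t ∂μ = if i = j then c i else 0) (σ τ : Perm ι) :
    ∏ j, ∫ t, F (σ j) (τ j) t ∂μ = if σ = τ then ∏ i, c i else 0 := by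
  split_ifs with h
  · subst h
    simp only [horth, if_true]
    exact Equiv.prod_comp σ c
  · obtain ⟨j, hj⟩ : ∃ j, σ j ≠ τ j := by
      by_contra! h'
      exact h (Equiv.ext h')
    exact prod_eq_zero (mem_univ j) (by rw [horth, if_neg hj])

theorem integral_det_sq_mul_prod_of_orthogonal [MeasurableSpace α] (μ : Measure α)
    [SigmaFinite μ] (f : ι → α → ℝ) (g : α → ℝ) (c : ι → ℝ)
    (hint : ∀ i j, Integrable (fun t => f i t * f j t * g t) μ)
    (horth : ∀ i j, ∫ t, f i t * f j t * g t ∂μ = if i = j then c i else 0) :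
    ∫ x, (Matrix.of fun i j => f i (x j)).det ^ 2 * ∏ j, g (x j) ∂Measure.pi (fun _ => μ) =
      (Fintype.card ι)! * ∏ i, c i := by
  have hprod (σ τ : Perm ι) :
      Integrable (fun x : ι → α => ∏ j, f (σ j) (x j) * f (τ j) (x j) * g (x j))
        (Measure.pi fun _ => μ) :=
    Integrable.fintype_prod (f := fun j t => f (σ j) t * f (τ j) t * g t) fun j => hint _ _
  calc _ = ∑ σ : Perm ι, ∑ τ : Perm ι, ((Perm.sign σ * Perm.sign τ : ℤ) : ℝ) *
          ∏ j, ∫ t, f (σ j) t * f (τ j) t * g t ∂μ := by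
        simp_rw [det_sq_mul_prod_eq_sum]
        rw [integral_finsetSum _ fun σ _ => integrable_finsetSum _ fun τ _ =>
          (hprod σ τ).const_mul _]
        refine sum_congr rfl fun σ _ => ?_
        rw [integral_finsetSum _ fun τ _ => (hprod σ τ).const_mul _]
        refine sum_congr rfl fun τ _ => ?_
        rw [integral_const_mul,
          integral_fintype_prod_eq_prod (fun j t => f (σ j) t * f (τ j) t * g t)]
    _ = ∑ _σ : Perm ι, ∏ i, c i := by
        have hF (σ τ : Perm ι) : ∏ j, ∫ t, f (σ j) t * f (τ j) t * g t ∂μ =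
            if σ = τ then ∏ i, c i else 0 :=
          prod_integral_eq_ite_of_orthogonal μ (fun i j t => f i t * f j t * g t) c horth σ τ
        simp_rw [hF, mul_ite, mul_zero, sum_ite_eq, if_pos (mem_univ _), ← Units.val_mul,
          Int.units_mul_self, Units.val_one, Int.cast_one, one_mul]
    _ = (Fintype.card ι)! * ∏ i, c i := by
        rw [sum_const, Finset.card_univ, Fintype.card_perm, nsmul_eq_mul]

end Andreief

theorem Polynomial.Monic.iterate_derivative_natDegree {R : Type*} [Semiring R] {p : R[X]}
    (hp : p.Monic) : derivative^[p.natDegree] p = C (p.natDegree ! : R) := by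
  have hdeg : (derivative^[p.natDegree] p).natDegree ≤ 0 :=
    (natDegree_iterate_derivative p _).trans_eq (Nat.sub_self _)
  rw [eq_C_of_natDegree_le_zero hdeg, coeff_iterate_derivative, zero_add, Nat.descFactorial_self,
    hp.coeff_natDegree, nsmul_one]

theorem integrable_pow_mul_exp_neg_mul_sq {b : ℝ} (hb : 0 < b) (n : ℕ) :
    Integrable fun x : ℝ => x ^ n * exp (-b * x ^ 2) := by
  simpa only [rpow_natCast] using integrable_rpow_mul_exp_neg_mul_sq hb (s := n) (by linarith)

theorem integrable_eval_mul_exp_neg_mul_sq {b : ℝ} (hb : 0 < b) (P : ℝ[X]) :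
    Integrable fun x : ℝ => P.eval x * exp (-b * x ^ 2) := by
  simp_rw [eval_eq_sum_range, sum_mul, mul_assoc]
  exact integrable_finsetSum _ fun i _ => (integrable_pow_mul_exp_neg_mul_sq hb i).const_mul _

theorem integrable_eval_mul_eval_mul_gaussian (P Q : ℝ[X]) :
    Integrable fun x : ℝ => P.eval x * Q.eval x * exp (-x ^ 2 / 2) := by
  simpa only [eval_mul, neg_mul, one_div, inv_mul_eq_div, neg_div] using
    integrable_eval_mul_exp_neg_mul_sq (b := 1 / 2) (by norm_num) (P * Q)

theorem integral_gaussian_half : ∫ x : ℝ, exp (-x ^ 2 / 2) = √(2 * π) := by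
  simpa only [neg_mul, one_div, inv_mul_eq_div, div_inv_eq_mul, mul_comm π, neg_div] using
    integral_gaussian (1 / 2)

noncomputable def realHermite (k : ℕ) : ℝ[X] := (hermite k).map (Int.castRingHom ℝ)

theorem realHermite_monic (k : ℕ) : (realHermite k).Monic := (hermite_monic k).map _

theorem natDegree_realHermite (k : ℕ) : (realHermite k).natDegree = k := by
  rw [realHermite, (hermite_monic k).natDegree_map, natDegree_hermite]

theorem realHermite_zero : realHermite 0 = 1 := by simp [realHermite]

theorem realHermite_succ (k : ℕ) :
    realHermite (k + 1) = X * realHermite k - derivative (realHermite k) := by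
  rw [realHermite, hermite_succ, Polynomial.map_sub, Polynomial.map_mul, map_X,
    ← derivative_map]
  rfl

theorem hasDerivAt_realHermite_mul_gaussian (k : ℕ) (x : ℝ) :
    HasDerivAt (fun t => (realHermite k).eval t * exp (-t ^ 2 / 2))
      (-((realHermite (k + 1)).eval x * exp (-x ^ 2 / 2))) x := by
  have hexp := (((hasDerivAt_pow 2 x).fun_neg).div_const 2).exp
  refine ((realHermite k).hasDerivAt x |>.mul hexp).congr_deriv ?_
  simp only [realHermite_succ, eval_sub, eval_mul, eval_X]
  push_cast
  ring

theorem integral_eval_mul_realHermite_succ (P : ℝ[X]) (k : ℕ) :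
    ∫ x, P.eval x * (realHermite (k + 1)).eval x * exp (-x ^ 2 / 2) =
      ∫ x, (derivative P).eval x * (realHermite k).eval x * exp (-x ^ 2 / 2) := by
  have h := integral_mul_deriv_eq_deriv_mul_of_integrable (u := P.eval)
    (v := fun t => -((realHermite k).eval t * exp (-t ^ 2 / 2)))
    (v' := fun t => (realHermite (k + 1)).eval t * exp (-t ^ 2 / 2))
    (fun x _ => P.hasDerivAt x)
    (fun x _ => by simpa using (hasDerivAt_realHermite_mul_gaussian k x).fun_neg)
    (by simpa only [Pi.mul_def, mul_assoc] using integrable_eval_mul_eval_mul_gaussian P _)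
    (by simpa only [Pi.mul_def, mul_neg, mul_assoc] using
      (integrable_eval_mul_eval_mul_gaussian (derivative P) (realHermite k)).fun_neg)
    (by simpa only [Pi.mul_def, mul_neg, mul_assoc] using
      (integrable_eval_mul_eval_mul_gaussian P (realHermite k)).fun_neg)
  simpa only [mul_neg, integral_neg, neg_neg, mul_assoc] using h

theorem integral_eval_mul_realHermite (P : ℝ[X]) (k : ℕ) :
    ∫ x, P.eval x * (realHermite k).eval x * exp (-x ^ 2 / 2) =
      ∫ x, (derivative^[k] P).eval x * exp (-x ^ 2 / 2) := by
  induction k generalizing P with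
  | zero => simp [realHermite_zero]
  | succ k ih =>
    rw [integral_eval_mul_realHermite_succ, ih, ← Function.iterate_succ_apply]

theorem integral_realHermite_mul_realHermite (i j : ℕ) :
    ∫ x, (realHermite i).eval x * (realHermite j).eval x * exp (-x ^ 2 / 2) =
      if i = j then (i ! : ℝ) * √(2 * π) else 0 := by
  wlog hij : i ≤ j generalizing i j
  · simp_rw [mul_comm ((realHermite i).eval _), this j i (by omega), eq_comm (a := j)]
    split_ifs with h <;> simp [h]
  rw [integral_eval_mul_realHermite]
  rcases hij.lt_or_eq with hlt | rfl
  · rw [iterate_derivative_eq_zero (by rwa [natDegree_realHermite]), if_neg hlt.ne]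
    simp
  · have h := (realHermite_monic i).iterate_derivative_natDegree
    rw [natDegree_realHermite] at h
    rw [h, if_pos rfl]
    simp only [eval_C, integral_const_mul, integral_gaussian_half]

theorem vanProd_eq_det_vandermonde (n : ℕ) (x : Fin n → ℝ) :
    vanProd n x = (Matrix.vandermonde x).det := by
  rw [Matrix.det_vandermonde, vanProd, prod_filter, Fintype.prod_prod_type]
  refine prod_congr rfl fun i _ => ?_
  rw [← prod_filter]
  congr 1
  ext j
  simp

theorem vanProd_eq_det_realHermite (n : ℕ) (x : Fin n → ℝ) :
    vanProd n x = (Matrix.of fun i j : Fin n => (realHermite i).eval (x j)).det := by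
  rw [vanProd_eq_det_vandermonde, Matrix.det_eval_matrixOfPolynomials_eq_det_vandermonde x
    (fun i => realHermite i) (fun i => natDegree_realHermite i) (fun i => realHermite_monic i),
    ← Matrix.det_transpose]
  rfl

theorem prod_Icc_factorial_eq_factorial_mul (n : ℕ) :
    ∏ k ∈ Icc 1 n, k ! = n ! * ∏ i : Fin n, (i : ℕ)! := by
  rw [Nat.prod_Icc_factorial, ← prod_range_succ_factorial, prod_range_succ,
    Fin.prod_univ_eq_prod_range, mul_comm]

theorem mehta_integral_general (n : ℕ) :
    ∫ x : Fin n → ℝ, vanProd n x ^ 2 * ∏ j, Real.exp (-(x j) ^ 2 / 2)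
      = (2 * Real.pi) ^ ((n : ℝ) / 2) * ∏ k ∈ Finset.Icc 1 n, (Nat.factorial k : ℝ) := by
  simp_rw [vanProd_eq_det_realHermite, volume_pi]
  rw [integral_det_sq_mul_prod_of_orthogonal volume (fun (i : Fin n) t => (realHermite i).eval t)
    (fun t => exp (-t ^ 2 / 2)) (fun i : Fin n => ((i : ℕ)! : ℝ) * √(2 * π))
    (fun i j => integrable_eval_mul_eval_mul_gaussian _ _)
    (fun i j => by simp only [integral_realHermite_mul_realHermite, Fin.val_inj])]
  rw [prod_mul_distrib, prod_const, Finset.card_univ, Fintype.card_fin,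
    rpow_div_two_eq_sqrt _ (by positivity), rpow_natCast]
  simp only [← Nat.cast_prod, prod_Icc_factorial_eq_factorial_mul]
  push_cast
  ring

/-- **Mehta's Gaussian integral** (normalization constant of the GUE eigenvalue density):
for every `n ≥ 1`,
`∫_{ℝ^n} Δ_n(x)² ∏_{j=1}^n e^{-x_j²/2} dx = (2π)^{n/2} · ∏_{k=1}^n k!`. -/
theorem mehta_integral (n : ℕ) (hn : 1 ≤ n) :
    ∫ x : Fin n → ℝ, vanProd n x ^ 2 * ∏ j, Real.exp (-(x j) ^ 2 / 2)
      = (2 * Real.pi) ^ ((n : ℝ) / 2) * ∏ k ∈ Finset.Icc 1 n, (Nat.factorial k : ℝ) :=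
  mehta_integral_general n
end

section
/- MacMahon's boxed plane partition formula: for all natural numbers a, b, c, the number of plane partitions in the a×b×c box — i.e., functions π : {1,…,a}×{1,…,b} → {0,1,…,c} that are weakly decreasing in each coordinate — equals ∏_{i=1}^a ∏_{j=1}^b ∏_{k=1}^c (i+j+k−1)/(i+j+k−2). -/
/-!
A plane partition `π` in the `a × b × c` box is the same as a Gelfand–Tsetlin pattern with
`a + c` levels and top row `(b^a, 0^c)`: entry `i` of level `m` is the number of entries of row
`i` of `π` exceeding `c + i - m` (row `i` conjugated and shifted by `i`).

Deleting the top level of a pattern with top row `λ` leaves a pattern whose top row `μ` ranges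
over the box `λ_{i+1} ≤ μ_i ≤ λ_i`. Summing over this box row by row (the determinant is
multilinear), the hockey-stick identity and a unitriangular row operation show by induction that
the number of patterns with `n` levels is the Jacobi–Trudi determinant `det (h_{λ_i - i + j})`,
where `h_m` is the number of `m`-multisets from `n` elements (`0` for `m < 0`).

When the width is `n` as well, every entry is a polynomial of degree `< n` in `x_i = λ_i - i`, so
the determinant is the Vandermonde determinant of the `x_i` times a constant, which the
unitriangular case `x_i = -i` determines: it equals `∏_{i<j} (x_i - x_j) / (j - i)`. For
`λ = (b^a, 0^c)` only the pairs `i < a ≤ j` contribute, and telescoping in `j` turns MacMahon's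
triple product into the same double product.
-/

namespace MacMahon

open Finset Matrix Polynomial Nat

def multichooseInt (n : ℕ) (m : ℤ) : ℚ := if 0 ≤ m then (n.multichoose m.toNat : ℚ) else 0

lemma multichooseInt_of_neg {n : ℕ} {m : ℤ} (hm : m < 0) : multichooseInt n m = 0 := by
  simp [multichooseInt, hm.not_ge]

lemma multichooseInt_natCast (n m : ℕ) : multichooseInt n m = n.multichoose m := by
  simp [multichooseInt]

lemma multichooseInt_zero_left (m : ℤ) : multichooseInt 0 m = if m = 0 then 1 else 0 := by
  rcases lt_trichotomy m 0 with hm | rfl | hm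
  · rw [multichooseInt_of_neg hm, if_neg hm.ne]
  · simp [multichooseInt]
  · lift m to ℕ using hm.le
    obtain ⟨k, rfl⟩ := Nat.exists_eq_succ_of_ne_zero (by omega : m ≠ 0)
    rw [multichooseInt_natCast, if_neg (by omega)]
    simp

lemma multichooseInt_succ_left (n : ℕ) (m : ℤ) :
    multichooseInt (n + 1) m = multichooseInt (n + 1) (m - 1) + multichooseInt n m := by
  rcases lt_trichotomy m 0 with hm | rfl | hm
  · simp [multichooseInt_of_neg, hm, hm.trans (by norm_num : (0 : ℤ) < 1)]
  · simp [multichooseInt]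
  · lift m to ℕ using hm.le
    obtain ⟨k, rfl⟩ := Nat.exists_eq_succ_of_ne_zero (by omega : m ≠ 0)
    rw [show ((k + 1 : ℕ) : ℤ) - 1 = k by omega]
    simp only [multichooseInt_natCast, Nat.multichoose_succ_succ]
    push_cast; ring

lemma sum_Icc_multichooseInt (n : ℕ) (s : ℤ) {lo hi : ℕ} (h : lo ≤ hi + 1) :
    ∑ m ∈ Icc lo hi, multichooseInt n (m + s)
      = multichooseInt (n + 1) (hi + s) - multichooseInt (n + 1) (lo - 1 + s) := by
  set f : ℕ → ℚ := fun m => multichooseInt (n + 1) (m - 1 + s)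
  calc ∑ m ∈ Icc lo hi, multichooseInt n (m + s)
      = ∑ m ∈ Ico lo (hi + 1), (f (m + 1) - f m) := by
        rw [Ico_add_one_right_eq_Icc]
        refine sum_congr rfl fun m _ => ?_
        simp only [f, cast_add, cast_one, add_sub_cancel_right]
        rw [multichooseInt_succ_left n (m + s)]
        ring_nf
    _ = _ := by
        rw [sum_Ico_sub f h]
        simp [f]

lemma multichooseInt_succ_eq_prod (n : ℕ) {m : ℤ} (hm : -n ≤ m) :
    multichooseInt (n + 1) m = (∏ t ∈ range n, ((m : ℚ) + t + 1)) / n ! := by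
  rcases lt_or_ge m 0 with hneg | hnonneg
  · have hcast : (((-m - 1).toNat : ℕ) : ℚ) = -m - 1 := by
      exact_mod_cast (show ((-m - 1).toNat : ℤ) = -m - 1 by omega)
    rw [multichooseInt_of_neg hneg, prod_eq_zero (i := (-m - 1).toNat) (by rw [mem_range]; omega)]
    · simp
    · rw [hcast]; ring
  · lift m to ℕ using hnonneg
    rw [multichooseInt_natCast, Nat.multichoose_eq, eq_div_iff (by positivity),
      show n + 1 + m - 1 = m + n by omega, choose_symm_add]
    have := Nat.ascFactorial_eq_factorial_mul_choose m n
    rw [ascFactorial_eq_prod_range] at this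
    rw [mul_comm]
    exact_mod_cast this.symm.trans (prod_congr rfl fun t _ => by ring)

lemma det_eval_mul_det_vandermonde {R : Type*} [CommRing R] {n : ℕ} (p : Fin n → R[X])
    (hp : ∀ j, (p j).natDegree < n) (v w : Fin n → R) :
    det (of fun i j => (p j).eval (v i)) * det (vandermonde w)
      = det (vandermonde v) * det (of fun i j => (p j).eval (w i)) := by
  have factor : ∀ u : Fin n → R, (of fun i j => (p j).eval (u i))
      = vandermonde u * of fun k j : Fin n => (p j).coeff k := by
    intro u
    ext i j
    rw [of_apply, mul_apply, eval_eq_sum_range' (hp j),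
      ← Fin.sum_univ_eq_sum_range (fun k => (p j).coeff k * u i ^ k)]
    simp only [vandermonde_apply, of_apply, mul_comm]
  rw [factor, factor, det_mul, det_mul]
  ring

variable {r : ℕ}

def jacobiTrudi (n : ℕ) (x : Fin r → ℤ) : Matrix (Fin r) (Fin r) ℚ :=
  of fun i j => multichooseInt n (x i + j)

lemma det_jacobiTrudi_neg_val (n : ℕ) : det (jacobiTrudi n fun i : Fin r => -(i : ℤ)) = 1 := by
  rw [det_of_isUpperTriangular]
  · refine prod_eq_one fun i _ => ?_
    simp [jacobiTrudi, multichooseInt]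
  · intro i j hji
    rw [id, id, Fin.lt_def] at hji
    exact multichooseInt_of_neg (by dsimp only; omega)

theorem det_jacobiTrudi {n : ℕ} (x : Fin n → ℤ) (hx : ∀ i, 1 - (n : ℤ) ≤ x i) :
    det (jacobiTrudi n x) = ∏ i, ∏ j ∈ Ioi i, ((x i - x j : ℚ) / (j - i)) := by
  obtain _ | k := n
  · simp
  set w : Fin (k + 1) → ℤ := fun i => -(i : ℤ)
  set p : Fin (k + 1) → ℚ[X] := fun j =>
    C (k ! : ℚ)⁻¹ * ∏ t ∈ range k, (X + C ((j : ℚ) + t + 1))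
  have hp : ∀ j, (p j).natDegree < k + 1 := fun j => by
    refine (natDegree_C_mul_le _ _).trans_lt (Nat.lt_succ_of_le ?_)
    refine (natDegree_prod_le _ _).trans ?_
    simp only [natDegree_X_add_C, sum_const, card_range, smul_eq_mul, mul_one, le_refl]
  have eval_p : ∀ y : Fin (k + 1) → ℤ, (∀ i, -(k : ℤ) ≤ y i) →
      jacobiTrudi (k + 1) y = of fun i j => (p j).eval (y i : ℚ) := by
    intro y hy
    ext i j
    rw [jacobiTrudi, of_apply, of_apply, multichooseInt_succ_eq_prod k (by have := hy i; omega)]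
    simp [p, eval_prod, div_eq_inv_mul, add_assoc]
  have hw : ∀ i, -(k : ℤ) ≤ w i := fun i => by simp only [w]; omega
  have key := det_eval_mul_det_vandermonde p hp (fun i => (x i : ℚ)) (fun i => (w i : ℚ))
  rw [← eval_p x (by push_cast at hx; simpa using hx), ← eval_p w hw, det_jacobiTrudi_neg_val,
    mul_one, ← eq_div_iff] at key
  · rw [key, det_vandermonde, det_vandermonde, ← prod_div_distrib]
    refine prod_congr rfl fun i _ => ?_
    rw [← prod_div_distrib]
    refine prod_congr rfl fun j _ => ?_
    simp only [w]
    push_cast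
    rw [← neg_div_neg_eq]
    ring_nf
  · rw [det_vandermonde_ne_zero_iff]
    intro i j hij
    exact Fin.ext (by simpa [w] using hij)

lemma det_of_rows_sub_succ {R : Type*} [CommRing R] (F : ℕ → Fin r → R) (hF : F r = 0) :
    det (of fun i : Fin r => F i - F (i + 1)) = det (of fun i : Fin r => F i) := by
  let N : Matrix (Fin r) (Fin r) R := of fun i k => if (k : ℕ) = i + 1 then 1 else 0
  refine det_eq_of_eq_det_one_mul (1 - N) ?_ ?_
  · rw [det_of_isUpperTriangular]
    · simp [N]
    · intro i k hki
      rw [id, id, Fin.lt_def] at hki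
      simp [N, one_apply, Fin.ext_iff, hki.ne', show (k : ℕ) ≠ i + 1 by omega]
  · ext i j
    have shift : (N * of fun i : Fin r => F i) i j = F (i + 1) j := by
      simp only [N, mul_apply, of_apply, ite_mul, one_mul, zero_mul]
      rw [Fin.sum_univ_eq_sum_range (fun k => if k = i + 1 then F k j else 0), sum_ite_eq']
      split_ifs with h
      · rfl
      · rw [show (i : ℕ) + 1 = r by rw [mem_range] at h; omega, hF, Pi.zero_apply]
    simp [sub_mul, shift]

def padZero (l : Fin r → ℕ) (i : ℕ) : ℕ := if h : i < r then l ⟨i, h⟩ else 0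

@[simp]
lemma padZero_val (l : Fin r → ℕ) (i : Fin r) : padZero l i = l i := by
  simp [padZero]

lemma padZero_of_le (l : Fin r → ℕ) {i : ℕ} (h : r ≤ i) : padZero l i = 0 := by
  simp [padZero, h.not_gt]

lemma padZero_succ_le {l : Fin r → ℕ} (hl : Antitone l) (i : Fin r) :
    padZero l (i + 1) ≤ l i := by
  unfold padZero
  split_ifs
  · exact hl (Fin.mk_le_mk.mpr (Nat.le_succ i))
  · exact Nat.zero_le _

def shifted (l : Fin r → ℕ) : Fin r → ℤ := fun i => l i - i

def interlacingBox (l : Fin r → ℕ) : Finset (Fin r → ℕ) :=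
  Fintype.piFinset fun i => Icc (padZero l (i + 1)) (l i)

lemma mem_interlacingBox {μ l : Fin r → ℕ} :
    μ ∈ interlacingBox l ↔ ∀ i : Fin r, padZero l (i + 1) ≤ μ i ∧ μ i ≤ l i := by
  simp [interlacingBox]

lemma sum_det_jacobiTrudi_interlacingBox (n : ℕ) {l : Fin r → ℕ} (hl : Antitone l) :
    ∑ μ ∈ interlacingBox l, det (jacobiTrudi n (shifted μ))
      = det (jacobiTrudi (n + 1) (shifted l)) := by
  let G : Fin r → ℕ → Fin r → ℚ := fun i m j => multichooseInt n (m - i + j)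
  let F : ℕ → Fin r → ℚ := fun k j => multichooseInt (n + 1) (padZero l k - k + j)
  have row_sum : ∀ i : Fin r,
      ∑ m ∈ Icc (padZero l (i + 1)) (l i), G i m = F i - F (i + 1) := by
    intro i
    ext j
    rw [Finset.sum_apply, Pi.sub_apply]
    simp only [G, F, padZero_val, sub_add_eq_add_sub, add_sub_assoc]
    rw [sum_Icc_multichooseInt n _ (Nat.le_succ_of_le (padZero_succ_le hl i))]
    congr 2
    push_cast; ring
  have hF : F r = 0 := by
    ext j
    exact multichooseInt_of_neg (by rw [padZero_of_le l le_rfl]; omega)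
  calc ∑ μ ∈ interlacingBox l, det (jacobiTrudi n (shifted μ))
      = ∑ μ ∈ interlacingBox l, detRowAlternating.toMultilinearMap fun i => G i (μ i) := rfl
    _ = det (of fun i : Fin r => F i - F (i + 1)) := by
      rw [interlacingBox, ← MultilinearMap.map_sum_finset]
      simp only [row_sum]
      rfl
    _ = det (jacobiTrudi (n + 1) (shifted l)) := by
      rw [det_of_rows_sub_succ F hF]
      congr
      ext i j
      simp [F, shifted]

lemma antitone_of_mem_interlacingBox {μ l : Fin r → ℕ} (h : μ ∈ interlacingBox l) :
    Antitone μ := by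
  have succ_le : ∀ k, padZero μ (k + 1) ≤ padZero μ k := by
    intro k
    by_cases hk : k + 1 < r
    · have h1 := (mem_interlacingBox.mp h ⟨k + 1, hk⟩).2
      have h2 := (mem_interlacingBox.mp h ⟨k, by omega⟩).1
      simp only [padZero, hk, (by omega : k < r), dite_true] at h2 ⊢
      omega
    · simp [padZero_of_le μ (not_lt.mp hk)]
  intro i j hij
  simpa using antitone_nat_of_succ_le succ_le (Fin.le_def.mp hij)

/-- `g m` is level `m` of the pattern, every level of width `r` (short rows padded with zeros);
levels are counted from the bottom `g 0 = 0` and equal `l` from `n` on. -/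
structure IsGTPattern (n : ℕ) (l : Fin r → ℕ) (g : ℕ → Fin r → ℕ) : Prop where
  bottom : g 0 = 0
  top : ∀ m, n ≤ m → g m = l
  interlace : ∀ m < n, g m ∈ interlacingBox (g (m + 1))

abbrev GTPattern (n : ℕ) (l : Fin r → ℕ) : Type :=
  {g : ℕ → Fin r → ℕ // IsGTPattern n l g}

def gtPatternSuccEquiv (n : ℕ) (l : Fin r → ℕ) :
    GTPattern (n + 1) l ≃ Σ μ : interlacingBox l, GTPattern n (μ : Fin r → ℕ) where
  toFun g := ⟨⟨g.1 n, by simpa [g.2.top (n + 1) le_rfl] using g.2.interlace n n.lt_succ_self⟩,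
    ⟨fun m => g.1 (min m n),
      { bottom := by simpa using g.2.bottom
        top := fun m hm => by rw [min_eq_right hm]
        interlace := fun m hm => by
          rw [min_eq_left hm.le, min_eq_left hm]
          exact g.2.interlace m (by omega) }⟩⟩
  invFun p := ⟨fun m => if m ≤ n then p.2.1 m else l,
    { bottom := by simpa using p.2.2.bottom
      top := fun m hm => if_neg (by omega)
      interlace := fun m hm => by
        rcases Nat.lt_succ_iff_lt_or_eq.mp hm with hm | rfl
        · simpa [hm.le, Nat.succ_le_of_lt hm] using p.2.2.interlace m hm
        · rw [if_pos le_rfl, if_neg (by omega), p.2.2.top m le_rfl]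
          exact p.1.2 }⟩
  left_inv g := by
    ext m : 2
    dsimp only
    split_ifs with hm
    · rw [min_eq_left hm]
    · exact (g.2.top m (by omega)).symm
  right_inv p := by
    refine Sigma.subtype_ext (Subtype.ext ?_) ?_
    · simpa using p.2.2.top n le_rfl
    · ext m : 1
      simp only [min_le_right, if_true]
      rcases le_total m n with hm | hm
      · rw [min_eq_left hm]
      · rw [min_eq_right hm, p.2.2.top n le_rfl, p.2.2.top m hm]

instance (n : ℕ) (l : Fin r → ℕ) : Finite (GTPattern n l) := by
  induction n generalizing l with
  | zero =>
    have : Subsingleton (GTPattern 0 l) := ⟨fun g g' => Subtype.ext <| funext fun m =>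
      (g.2.top m m.zero_le).trans (g'.2.top m m.zero_le).symm⟩
    infer_instance
  | succ n ih => exact Finite.of_equiv _ (gtPatternSuccEquiv n l).symm

theorem card_gtPattern_eq_det (n : ℕ) {l : Fin r → ℕ} (hl : Antitone l) :
    (Nat.card (GTPattern n l) : ℚ) = det (jacobiTrudi n (shifted l)) := by
  induction n generalizing l with
  | zero =>
    by_cases hl0 : l = 0
    · subst hl0
      have : Unique (GTPattern 0 (0 : Fin r → ℕ)) :=
        { default := ⟨fun _ => 0, rfl, fun _ _ => rfl, fun _ h => (Nat.not_lt_zero _ h).elim⟩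
          uniq := fun g => Subtype.ext <| funext fun m => g.2.top m m.zero_le }
      have hJ : jacobiTrudi 0 (shifted (0 : Fin r → ℕ)) = 1 := by
        ext i j
        simp [jacobiTrudi, shifted, multichooseInt_zero_left, one_apply, Fin.ext_iff,
          neg_add_eq_zero]
      simp [hJ]
    · have : IsEmpty (GTPattern 0 l) :=
        ⟨fun g => hl0 ((g.2.top 0 le_rfl).symm.trans g.2.bottom)⟩
      obtain ⟨i, hi⟩ := Function.ne_iff.mp hl0
      rw [Pi.zero_apply] at hi
      have hr : 0 < r := i.pos
      rw [Nat.card_of_isEmpty, Nat.cast_zero, eq_comm]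
      refine det_eq_zero_of_row_eq_zero ⟨0, hr⟩ fun j => ?_
      have := hl (show (⟨0, hr⟩ : Fin r) ≤ i from Nat.zero_le _)
      rw [jacobiTrudi, of_apply, multichooseInt_zero_left, if_neg]
      simp only [shifted, Fin.val_mk, CharP.cast_eq_zero, sub_zero]
      omega
  | succ n ih =>
    rw [Nat.card_congr (gtPatternSuccEquiv n l), Nat.card_sigma, Nat.cast_sum,
      sum_coe_sort (interlacingBox l) fun μ => (Nat.card (GTPattern n μ) : ℚ),
      ← sum_det_jacobiTrudi_interlacingBox n hl]
    exact sum_congr rfl fun μ hμ => ih (antitone_of_mem_interlacingBox hμ)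

theorem card_gtPattern {n : ℕ} {l : Fin n → ℕ} (hl : Antitone l) :
    (Nat.card (GTPattern n l) : ℚ)
      = ∏ i, ∏ j ∈ Ioi i, (((l i : ℚ) - i) - (l j - j)) / (j - i) := by
  rw [card_gtPattern_eq_det n hl, det_jacobiTrudi _ fun i => by simp only [shifted]; omega]
  simp [shifted]

namespace IsGTPattern

variable {n : ℕ} {l : Fin r → ℕ} {g : ℕ → Fin r → ℕ}

lemma monotone (hg : IsGTPattern n l g) (i : Fin r) : Monotone fun m => g m i := by
  refine monotone_nat_of_le_succ fun m => ?_
  rcases lt_or_ge m n with hm | hm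
  · exact (mem_interlacingBox.mp (hg.interlace m hm) i).2
  · rw [hg.top m hm, hg.top (m + 1) (by omega)]

lemma le_top (hg : IsGTPattern n l g) (m : ℕ) (i : Fin r) : g m i ≤ l i := by
  simpa [hg.top (max m n) (le_max_right m n)] using hg.monotone i (le_max_left m n)

lemma padZero_add_le (hg : IsGTPattern n l g) {m s : ℕ} (h : m + s ≤ n) (i : ℕ) :
    padZero (g (m + s)) (i + s) ≤ padZero (g m) i := by
  induction s with
  | zero => rfl
  | succ s ih =>
    refine le_trans ?_ (ih (by omega))
    have hbox := mem_interlacingBox.mp (hg.interlace (m + s) (by omega))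
    by_cases hi : i + s < r
    · simpa [← add_assoc, padZero, hi] using (hbox ⟨i + s, hi⟩).1
    · simp [padZero_of_le _ (by omega : r ≤ i + (s + 1))]

lemma eq_zero_of_le (hg : IsGTPattern n l g) {m : ℕ} (hmn : m ≤ n) {i : Fin r} (hmi : m ≤ i) :
    g m i = 0 := by
  have := hg.padZero_add_le (m := 0) (s := m) (by omega) (i - m)
  rw [zero_add, Nat.sub_add_cancel hmi, hg.bottom, padZero_val] at this
  exact Nat.le_zero.mp (this.trans_eq (by simp [padZero]))

lemma padZero_le (hg : IsGTPattern n l g) {m : ℕ} (hmn : m ≤ n) (i : Fin r) :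
    padZero l (i + (n - m)) ≤ g m i := by
  simpa [Nat.add_sub_cancel' hmn, hg.top n le_rfl] using
    hg.padZero_add_le (m := m) (s := n - m) (by omega) i

end IsGTPattern

lemma lt_card_filter_iff_of_antitone {N : ℕ} {P : Fin N → Prop} [DecidablePred P]
    (hP : Antitone P) (j : Fin N) : (j : ℕ) < #{i | P i} ↔ P j := by
  constructor
  · intro h
    by_contra hj
    have : univ.filter P ⊆ Iio j := fun i hi =>
      mem_Iio.mpr (lt_of_not_ge fun hji => hj (hP hji (mem_filter.mp hi).2))
    exact absurd ((card_le_card this).trans_eq (Fin.card_Iio j)) (not_le.mpr h)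
  · intro hj
    have : Iic j ⊆ univ.filter P := fun i hi =>
      mem_filter.mpr ⟨mem_univ i, hP (mem_Iic.mp hi) hj⟩
    exact Nat.lt_of_succ_le ((Fin.card_Iic j).symm.trans_le (card_le_card this))

section PlanePartition

variable {a b : ℕ}

def IsBoxedPlanePartition (c : ℕ) (π : Fin a → Fin b → ℕ) : Prop :=
  (∀ i j, π i j ≤ c) ∧
  (∀ (i i' : Fin a) (j : Fin b), i ≤ i' → π i' j ≤ π i j) ∧
  (∀ (i : Fin a) (j j' : Fin b), j ≤ j' → π i j' ≤ π i j)

def boxShape (a b c : ℕ) : Fin (a + c) → ℕ := fun i => if (i : ℕ) < a then b else 0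

lemma antitone_boxShape (a b c : ℕ) : Antitone (boxShape a b c) := by
  intro i j hij
  simp only [boxShape]
  split_ifs <;> first | rfl | exact Nat.zero_le _ | (rw [Fin.le_def] at hij; omega)

def toPattern (c : ℕ) (π : Fin a → Fin b → ℕ) (m : ℕ) (i : Fin (a + c)) : ℕ :=
  if h : (i : ℕ) < a then #{j | c + i < m + π ⟨i, h⟩ j} else 0

def ofPattern (c : ℕ) (g : ℕ → Fin (a + c) → ℕ) (i : Fin a) (j : Fin b) : ℕ :=
  #{v : Fin c | (j : ℕ) < g (c + i - v) (Fin.castAdd c i)}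

lemma toPattern_castAdd (c : ℕ) (π : Fin a → Fin b → ℕ) (m : ℕ) (i : Fin a) :
    toPattern c π m (Fin.castAdd c i) = #{j | c + i < m + π i j} := by
  simp [toPattern]

variable {c : ℕ} {π : Fin a → Fin b → ℕ}

lemma isGTPattern_toPattern (hπ : IsBoxedPlanePartition c π) :
    IsGTPattern (a + c) (boxShape a b c) (toPattern c π) := by
  obtain ⟨hle, hcol, -⟩ := hπ
  refine ⟨?_, ?_, ?_⟩
  · ext i
    simp only [toPattern, Pi.zero_apply]
    split_ifs with h
    · refine card_eq_zero.mpr (filter_eq_empty_iff.mpr fun j _ => ?_)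
      have := hle ⟨i, h⟩ j
      omega
    · rfl
  · intro m hm
    ext i
    simp only [toPattern, boxShape]
    split_ifs with h
    · rw [filter_true_of_mem fun j _ => by omega, Finset.card_univ, Fintype.card_fin]
    · rfl
  · intro m _
    rw [mem_interlacingBox]
    intro i
    constructor
    · unfold padZero
      split_ifs with hi
      · simp only [toPattern]
        split_ifs with h1 h2
        · refine card_le_card fun j hj => mem_filter.mpr ⟨mem_univ j, ?_⟩
          have := (mem_filter.mp hj).2
          have := hcol ⟨i, h2⟩ ⟨i + 1, h1⟩ j (Fin.mk_le_mk.mpr (Nat.le_succ i))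
          omega
        · omega
        all_goals exact Nat.zero_le _
      · exact Nat.zero_le _
    · simp only [toPattern]
      split_ifs
      · refine card_le_card fun j hj => mem_filter.mpr ⟨mem_univ j, ?_⟩
        have := (mem_filter.mp hj).2
        omega
      · rfl

lemma isBoxedPlanePartition_ofPattern {g : ℕ → Fin (a + c) → ℕ}
    (hg : IsGTPattern (a + c) (boxShape a b c) g) :
    IsBoxedPlanePartition c (ofPattern (b := b) c g) := by
  refine ⟨fun i j => ?_, fun i i' j hii' => ?_, fun i j j' hjj' => ?_⟩
  · exact (card_filter_le _ _).trans_eq (by simp)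
  · refine card_le_card fun v hv => mem_filter.mpr ⟨mem_univ v, ?_⟩
    have hv := (mem_filter.mp hv).2
    have hs : (i : ℕ) + (i' - i) = i' := Nat.add_sub_cancel' hii'
    have := hg.padZero_add_le (m := c + i - v) (s := i' - i) (by omega) i
    rw [show c + i - v + (i' - i) = c + i' - v by omega, hs] at this
    exact hv.trans_le ((padZero_val _ (Fin.castAdd c i')).symm.trans_le
      (this.trans_eq (padZero_val _ (Fin.castAdd c i))))
  · exact card_le_card fun v hv => mem_filter.mpr ⟨mem_univ v,
      lt_of_le_of_lt (Fin.le_def.mp hjj') (mem_filter.mp hv).2⟩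

lemma ofPattern_toPattern (hπ : IsBoxedPlanePartition c π) :
    ofPattern c (toPattern c π) = π := by
  ext i j
  have row_conj : ∀ v : Fin c,
      (j : ℕ) < toPattern c π (c + i - v) (Fin.castAdd c i) ↔ v < π i j := by
    intro v
    rw [toPattern_castAdd]
    rw [← lt_card_filter_iff_of_antitone (P := fun j' => (v : ℕ) < π i j')
      (fun j₁ j₂ h hv => hv.trans_le (hπ.2.2 i j₁ j₂ h)) j]
    congr! 3
    omega
  rw [ofPattern, filter_congr fun v _ => row_conj v, Fin.card_filter_val_lt]
  exact min_eq_right (hπ.1 i j)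

lemma toPattern_ofPattern {g : ℕ → Fin (a + c) → ℕ}
    (hg : IsGTPattern (a + c) (boxShape a b c) g) :
    toPattern c (ofPattern (b := b) c g) = g := by
  ext m i
  have hb : g m i ≤ boxShape a b c i := hg.le_top m i
  simp only [toPattern]
  split_ifs with hi
  swap
  · simp only [boxShape, hi, if_false] at hb
    omega
  simp only [boxShape, hi, if_true] at hb
  have hle : ∀ j, ofPattern c g ⟨i, hi⟩ j ≤ c :=
    (isBoxedPlanePartition_ofPattern hg).1 ⟨i, hi⟩
  rcases le_or_gt m i with hmi | hmi
  · rw [hg.eq_zero_of_le (by omega) hmi]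
    exact card_eq_zero.mpr (filter_eq_empty_iff.mpr fun j _ => by have := hle j; omega)
  rcases le_or_gt m (c + i) with hmc | hmc
  · have col_conj : ∀ j : Fin b,
        c + i < m + ofPattern c g ⟨i, hi⟩ j ↔ (j : ℕ) < g m i := by
      intro j
      let v₀ : Fin c := ⟨c + i - m, by omega⟩
      have := lt_card_filter_iff_of_antitone (P := fun v : Fin c => (j : ℕ) < g (c + i - v) i)
        (fun v₁ v₂ h hv => hv.trans_le (hg.monotone i (by rw [Fin.le_def] at h; omega))) v₀
      rw [show c + i - v₀ = m by simp only [v₀]; omega] at this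
      rw [← this]
      change c + i < m + #{v : Fin c | (j : ℕ) < g (c + i - v) i} ↔ c + i - m < _
      omega
    rw [filter_congr fun j _ => col_conj j, Fin.card_filter_val_lt]
    exact min_eq_right hb
  · have : b ≤ g m i := by
      rcases le_or_gt m (a + c) with hm | hm
      · have := hg.padZero_le hm i
        rw [padZero, dif_pos (by omega)] at this
        simpa [boxShape, show (i : ℕ) + (a + c - m) < a by omega] using this
      · simp [hg.top m hm.le, boxShape, hi]
    rw [filter_true_of_mem fun j _ => by omega, Finset.card_univ, Fintype.card_fin]
    omega

end PlanePartition

def planePartitionEquiv (a b c : ℕ) :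
    {π : Fin a → Fin b → ℕ // IsBoxedPlanePartition c π}
      ≃ GTPattern (a + c) (boxShape a b c) where
  toFun π := ⟨toPattern c π.1, isGTPattern_toPattern π.2⟩
  invFun g := ⟨ofPattern c g.1, isBoxedPlanePartition_ofPattern g.2⟩
  left_inv π := Subtype.ext (ofPattern_toPattern π.2)
  right_inv g := Subtype.ext (toPattern_ofPattern g.2)

lemma prod_Ioi_fin_eq_prod_range {M : Type*} [CommMonoid M] (n : ℕ) (f : ℕ → ℕ → M) :
    ∏ i : Fin n, ∏ j ∈ Ioi i, f i j = ∏ i ∈ range n, ∏ j ∈ Ioo i n, f i j := by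
  rw [← Fin.prod_univ_eq_prod_range (fun i => ∏ j ∈ Ioo i n, f i j)]
  refine prod_congr rfl fun i _ => ?_
  rw [← Fin.map_valEmbedding_Ioi, prod_map]
  rfl

lemma prod_Icc_one_eq_prod_range {M : Type*} [CommMonoid M] (n : ℕ) (f : ℕ → M) :
    ∏ i ∈ Icc 1 n, f i = ∏ i ∈ range n, f (i + 1) := by
  rw [← Ico_add_one_right_eq_Icc, prod_Ico_eq_prod_range, Nat.add_sub_cancel]
  simp only [add_comm]

lemma prod_range_add_one_div (q : ℚ) (hq : 0 < q) (b : ℕ) :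
    ∏ j ∈ range b, (q + j + 1) / (q + j) = (q + b) / q := by
  induction b with
  | zero => simp [hq.ne']
  | succ b ih =>
    rw [prod_range_succ, ih]
    have : 0 < q + b := by positivity
    field_simp
    push_cast
    ring

lemma prod_boxShape (a b c : ℕ) :
    ∏ i : Fin (a + c), ∏ j ∈ Ioi i,
        (((boxShape a b c i : ℚ) - i) - (boxShape a b c j - j)) / (j - i)
      = ∏ i ∈ range a, ∏ k ∈ range c, ((i : ℚ) + k + 1 + b) / (i + k + 1) := by
  set F : ℕ → ℕ → ℚ := fun i j =>
    ((((if i < a then b else 0 : ℕ) : ℚ) - i) - ((if j < a then b else 0 : ℕ) - j)) / (j - i)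
  have F_eq_one : ∀ i j, i < j → (i < a ↔ j < a) → F i j = 1 := by
    intro i j hij hij_a
    have : (j : ℚ) - i ≠ 0 := sub_ne_zero.mpr (by exact_mod_cast hij.ne')
    by_cases hi : i < a
    · simp only [F, hi, hij_a.mp hi, if_true]
      field_simp
      ring
    · simp only [F, hi, mt hij_a.mpr hi, if_false]
      field_simp
      ring
  calc _ = ∏ i ∈ range (a + c), ∏ j ∈ Ioo i (a + c), F i j := prod_Ioi_fin_eq_prod_range _ F
    _ = ∏ i ∈ range a, ∏ k ∈ range c, F i (a + k) := by
      rw [prod_range_add, prod_eq_one (s := range c), mul_one]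
      · refine prod_congr rfl fun i hi => ?_
        rw [mem_range] at hi
        rw [← Ico_add_one_left_eq_Ioo, ← prod_Ico_consecutive _ (by omega : i + 1 ≤ a)
          (by omega : a ≤ a + c),
          prod_eq_one fun j hj => by rw [mem_Ico] at hj; exact F_eq_one i j (by omega) (by omega),
          one_mul, prod_Ico_eq_prod_range, Nat.add_sub_cancel_left]
      · intro x _
        refine prod_eq_one fun j hj => ?_
        rw [mem_Ioo] at hj
        exact F_eq_one _ j (by omega) (by omega)
    _ = _ := by
      rw [← prod_range_reflect]
      refine prod_congr rfl fun i hi => prod_congr rfl fun k _ => ?_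
      rw [mem_range] at hi
      simp only [F, show a - 1 - i < a by omega, show ¬ a + k < a by omega, if_true, if_false]
      push_cast [show i ≤ a - 1 by omega, show 1 ≤ a by omega]
      congr 1 <;> ring

theorem card_boxedPlanePartition (a b c : ℕ) :
    (Nat.card {π : Fin a → Fin b → ℕ // IsBoxedPlanePartition c π} : ℚ)
      = ∏ i ∈ range a, ∏ k ∈ range c, ((i : ℚ) + k + 1 + b) / (i + k + 1) := by
  rw [Nat.card_congr (planePartitionEquiv a b c), card_gtPattern (antitone_boxShape a b c),
    prod_boxShape]

end MacMahon

open MacMahon Finset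

/-- **MacMahon's boxed plane partition formula**: the number of plane partitions in the
`a × b × c` box — functions `π : {1,…,a} × {1,…,b} → {0,…,c}` weakly decreasing in each
coordinate — equals `∏_{i=1}^a ∏_{j=1}^b ∏_{k=1}^c (i+j+k-1)/(i+j+k-2)`. -/
theorem macmahon_boxed_plane_partitions (a b c : ℕ) :
    (Nat.card {π : Fin a → Fin b → ℕ //
        (∀ i j, π i j ≤ c) ∧
        (∀ (i i' : Fin a) (j : Fin b), i ≤ i' → π i' j ≤ π i j) ∧
        (∀ (i : Fin a) (j j' : Fin b), j ≤ j' → π i j' ≤ π i j)} : ℚ)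
      = ∏ i ∈ Finset.Icc 1 a, ∏ j ∈ Finset.Icc 1 b, ∏ k ∈ Finset.Icc 1 c,
          (((i : ℚ) + j + k - 1) / ((i : ℚ) + j + k - 2)) := by
  refine (card_boxedPlanePartition a b c).trans ?_
  simp only [prod_Icc_one_eq_prod_range]
  refine prod_congr rfl fun i _ => ?_
  rw [prod_comm]
  refine prod_congr rfl fun k _ => ?_
  rw [← prod_range_add_one_div ((i : ℚ) + k + 1) (by positivity) b]
  push_cast
  exact prod_congr rfl fun j _ => by congr 1 <;> ring
end

section
/- Macdonald's hyperfactorial form of MacMahon's formula: for all natural numbers a, b, c, the identity of rational numbers H(a)·H(b)·H(c)·H(a+b+c) / ( H(a+b)·H(a+c)·H(b+c) ) = ∏_{i=1}^a ∏_{j=1}^b ∏_{k=1}^c (i+j+k−1)/(i+j+k−2) holds, where H(n) := ∏_{k=0}^{n−1} k! = (n−1)!·(n−2)!⋯1!·0! (so H(0) = H(1) = 1). -/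
/-- The hyperfactorial-type product `H(n) = 0! · 1! ⋯ (n-1)!` (so `H 0 = H 1 = 1`),
viewed as a rational number. -/
def Hfac (n : ℕ) : ℚ :=
  ∏ k ∈ Finset.range n, (Nat.factorial k : ℚ)

/-!
Induct on `c`. Raising `c` by one multiplies the left side by `(a+b+c)! c! / ((a+c)! (b+c)!)`,
and the right side by the new layer `∏ᵢ ∏ⱼ (i+j+c)/(i+j+c-1)`. The product over `j` telescopes to
`(i+b+c)/(i+c)`, and the product of these over `i` is the same ratio of factorials.
-/

open Finset Nat

theorem Finset.prod_Icc_one_eq_prod_range {M : Type*} [CommMonoid M] (f : ℕ → M) (n : ℕ) :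
    ∏ k ∈ Icc 1 n, f k = ∏ k ∈ range n, f (k + 1) := by
  rw [← Ico_add_one_right_eq_Icc, prod_Ico_eq_prod_range, Nat.add_sub_cancel]
  simp only [Nat.add_comm 1]

theorem Finset.prod_range_div₀ {G : Type*} [CommGroupWithZero G] (f : ℕ → G)
    (hf : ∀ k, f k ≠ 0) (n : ℕ) : ∏ k ∈ range n, f (k + 1) / f k = f n / f 0 := by
  induction n with
  | zero => simp [div_self (hf 0)]
  | succ n ih => rw [prod_range_succ, ih, mul_comm, div_mul_div_cancel₀ (hf n)]

theorem prod_Icc_one_natCast_add {K : Type*} [Field K] [CharZero K] (m a : ℕ) :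
    ∏ i ∈ Icc 1 a, ((i : K) + m) = ((a + m)! : K) / (m ! : K) := by
  have hfac : ∀ k, ((k + m)! : K) ≠ 0 := fun k => by exact_mod_cast factorial_ne_zero _
  have htele := prod_range_div₀ (fun k => ((k + m)! : K)) hfac a
  rw [Nat.zero_add] at htele
  rw [prod_Icc_one_eq_prod_range, ← htele]
  refine prod_congr rfl fun k _ => ?_
  rw [Nat.add_right_comm, factorial_succ, Nat.cast_mul, mul_div_cancel_right₀ _ (hfac k)]
  push_cast
  ring

theorem prod_Icc_one_add_div_add_sub_one {K : Type*} [Field K] (x : K)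
    (hx : ∀ j : ℕ, x + j ≠ 0) (b : ℕ) :
    ∏ j ∈ Icc 1 b, (x + j) / (x + j - 1) = (x + b) / x := by
  have htele := prod_range_div₀ (fun j : ℕ => x + j) hx b
  rw [Nat.cast_zero, add_zero] at htele
  rw [prod_Icc_one_eq_prod_range, ← htele]
  refine prod_congr rfl fun k _ => ?_
  push_cast
  ring_nf

theorem prod_Icc_prod_Icc_add_div_add_sub_one (a b c : ℕ) :
    ∏ i ∈ Icc 1 a, ∏ j ∈ Icc 1 b, ((i : ℚ) + c + j) / ((i : ℚ) + c + j - 1)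
      = ((a + b + c)! * c ! : ℚ) / ((a + c)! * (b + c)!) := by
  have hinner : ∀ i ∈ Icc 1 a,
      ∏ j ∈ Icc 1 b, ((i : ℚ) + c + j) / ((i : ℚ) + c + j - 1)
        = ((i : ℚ) + ↑(b + c)) / (i + c) := by
    intro i hi
    have hi : (1 : ℚ) ≤ i := by exact_mod_cast (mem_Icc.1 hi).1
    rw [prod_Icc_one_add_div_add_sub_one _ (fun j => by positivity)]
    push_cast
    ring
  rw [prod_congr rfl hinner, prod_div_distrib, prod_Icc_one_natCast_add,
    prod_Icc_one_natCast_add, ← Nat.add_assoc]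
  field_simp

theorem Hfac_succ (n : ℕ) : Hfac (n + 1) = Hfac n * n ! := prod_range_succ _ n

theorem Hfac_ne_zero (n : ℕ) : Hfac n ≠ 0 :=
  prod_ne_zero_iff.2 fun k _ => by exact_mod_cast factorial_ne_zero k

theorem Hfac_quotient_succ (a b c : ℕ) :
    Hfac a * Hfac b * Hfac (c + 1) * Hfac (a + b + (c + 1))
        / (Hfac (a + b) * Hfac (a + (c + 1)) * Hfac (b + (c + 1)))
      = Hfac a * Hfac b * Hfac c * Hfac (a + b + c) / (Hfac (a + b) * Hfac (a + c) * Hfac (b + c))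
        * (((a + b + c)! * c ! : ℚ) / ((a + c)! * (b + c)!)) := by
  simp only [← Nat.add_assoc, Hfac_succ]
  field_simp [Hfac_ne_zero]

/-- **Macdonald's hyperfactorial form of MacMahon's formula**: for all natural numbers
`a`, `b`, `c`,
`H(a)·H(b)·H(c)·H(a+b+c) / (H(a+b)·H(a+c)·H(b+c))
  = ∏_{i=1}^a ∏_{j=1}^b ∏_{k=1}^c (i+j+k-1)/(i+j+k-2)`. -/
theorem macdonald_macmahon (a b c : ℕ) :
    Hfac a * Hfac b * Hfac c * Hfac (a + b + c) / (Hfac (a + b) * Hfac (a + c) * Hfac (b + c))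
      = ∏ i ∈ Finset.Icc 1 a, ∏ j ∈ Finset.Icc 1 b, ∏ k ∈ Finset.Icc 1 c,
          (((i : ℚ) + j + k - 1) / ((i : ℚ) + j + k - 2)) := by
  induction c with
  | zero =>
    have hH0 : Hfac 0 = 1 := prod_range_zero _
    simp only [hH0, Nat.add_zero, mul_one, Icc_eq_empty_of_lt Nat.zero_lt_one, prod_empty,
      prod_const_one]
    rw [div_eq_one_iff_eq (by simp [Hfac_ne_zero])]
    ring
  | succ c ih =>
    simp_rw [prod_Icc_succ_top (Nat.le_add_left 1 c), prod_mul_distrib]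
    rw [Hfac_quotient_succ, ih, ← prod_Icc_prod_Icc_add_div_add_sub_one]
    congr 1
    refine prod_congr rfl fun i _ => prod_congr rfl fun j _ => ?_
    push_cast
    ring_nf
end
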